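/- arXiv:1903.10137 — 6 statements merged into one kernel-verified Lean document; each statement's English description precedes it below -/
import Mathlib

section
/- Let f₀ : ℝ^n → ℝ be a convex polynomial. If the Hessian ∇²f₀(x₀) is positive definite at some point x₀ ∈ ℝ^n, then f₀ is coercive (f₀(x) → +∞ as ‖x‖ → ∞) and strictly convex on ℝ^n. -/
set_option maxHeartbeats 1000000

open Polynomial Filter Metric Topology

lemma aux_eval_aeval {n : ℕ} (P : MvPolynomial (Fin n) ℝ) (g : Fin n → Polynomial ℝ) (t : ℝ) :
    Polynomial.eval t (MvPolynomial.aeval g P) =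
      MvPolynomial.eval (fun i => Polynomial.eval t (g i)) P := by
  induction P using MvPolynomial.induction_on with
  | C a => simp
  | add p q hp hq => simp [hp, hq]
  | mul_X p i hp => simp [hp]

lemma aux_contDiff {n : ℕ} (P : MvPolynomial (Fin n) ℝ) :
    ContDiff ℝ 2 (fun x : Fin n → ℝ => MvPolynomial.eval x P) := by
  induction P using MvPolynomial.induction_on with
  | C a => simpa using contDiff_const (c := a)
  | add p q hp hq => simpa using hp.add hq
  | mul_X p i hp =>
      simpa using hp.mul ((ContinuousLinearMap.proj i :
        (Fin n → ℝ) →L[ℝ] ℝ).contDiff)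

lemma aux_deg_le_one (p : Polynomial ℝ) (A B : ℝ)
    (h : ∀ t : ℝ, 1 ≤ t → |p.eval t| ≤ A + B * t) : p.natDegree ≤ 1 := by
  by_contra hdeg
  push_neg at hdeg
  have hp0 : p ≠ 0 := by
    intro h0; rw [h0] at hdeg; simp at hdeg
  set L : Polynomial ℝ := Polynomial.C B * Polynomial.X + Polynomial.C A with hL
  set u : Polynomial ℝ := p ^ 2 - L ^ 2 with hu
  have hLdeg : L.degree ≤ 1 := Polynomial.degree_linear_le
  have hpdeg : (p ^ 2).degree = (2 * p.natDegree : ℕ) := by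
    rw [Polynomial.degree_pow, Polynomial.degree_eq_natDegree hp0]
    norm_cast
  have hlt : (-(L ^ 2)).degree < (p ^ 2).degree := by
    rw [Polynomial.degree_neg, hpdeg]
    have : (L ^ 2).degree ≤ 2 := by
      rw [Polynomial.degree_pow]
      calc (2 : ℕ) • L.degree ≤ (2 : ℕ) • (1 : WithBot ℕ) := by
            exact nsmul_le_nsmul_right hLdeg 2
        _ = 2 := by norm_num
    refine lt_of_le_of_lt this ?_
    exact_mod_cast by exact_mod_cast Nat.lt_of_lt_of_le (by norm_num) (by omega : 4 ≤ 2 * p.natDegree)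
  have hudeg : u.degree = (p ^ 2).degree := by
    rw [hu, sub_eq_add_neg, add_comm]
    rw [Polynomial.degree_add_eq_right_of_degree_lt hlt]
  have hupos : 0 < u.degree := by
    rw [hudeg, hpdeg]
    exact_mod_cast Nat.lt_of_lt_of_le (by norm_num) (by omega : 1 ≤ 2 * p.natDegree)
  have hulc : 0 ≤ u.leadingCoeff := by
    have : u.leadingCoeff = (p ^ 2).leadingCoeff := by
      rw [hu, sub_eq_add_neg, add_comm]
      exact Polynomial.leadingCoeff_add_of_degree_lt hlt
    rw [this, Polynomial.leadingCoeff_pow]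
    positivity
  have htends := Polynomial.tendsto_atTop_of_leadingCoeff_nonneg u hupos hulc
  have hev : ∀ᶠ t : ℝ in atTop, 0 < u.eval t := htends.eventually_gt_atTop 0
  obtain ⟨t, ht1, ht2⟩ := (hev.and (eventually_ge_atTop (1 : ℝ))).exists
  have hb := h t ht2
  have hABt : 0 ≤ A + B * t := le_trans (abs_nonneg _) hb
  have : (p.eval t) ^ 2 ≤ (A + B * t) ^ 2 := by
    calc (p.eval t) ^ 2 = |p.eval t| ^ 2 := (sq_abs _).symm
      _ ≤ (A + B * t) ^ 2 := by exact pow_le_pow_left₀ (abs_nonneg _) hb 2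
  have : u.eval t ≤ 0 := by
    simp only [hu, hL, Polynomial.eval_sub, Polynomial.eval_pow, Polynomial.eval_add,
      Polynomial.eval_mul, Polynomial.eval_C, Polynomial.eval_X]
    nlinarith [this]
  linarith

lemma aux_bridge {n : ℕ} (f : (Fin n → ℝ) → ℝ) (hf : ContDiff ℝ 2 f)
    (x₀ v : Fin n → ℝ) (q : Polynomial ℝ)
    (hq : ∀ t : ℝ, f (x₀ + t • v) = q.eval t) :
    iteratedFDeriv ℝ 2 f x₀ ![v, v] = q.derivative.derivative.eval 0 := by
  have hdf : Differentiable ℝ f := hf.differentiable (by norm_num)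
  have hline : ∀ t : ℝ, HasDerivAt (fun s : ℝ => x₀ + s • v) v t := by
    intro t
    simpa using ((hasDerivAt_id t).smul_const v).const_add x₀
  have h1 : ∀ t : ℝ, fderiv ℝ f (x₀ + t • v) v = q.derivative.eval t := by
    intro t
    have hc : HasDerivAt (fun s : ℝ => f (x₀ + s • v)) (fderiv ℝ f (x₀ + t • v) v) t :=
      ((hdf (x₀ + t • v)).hasFDerivAt).comp_hasDerivAt t (hline t)
    have hc2 : HasDerivAt (fun s : ℝ => f (x₀ + s • v)) (q.derivative.eval t) t := by
      have h' := q.hasDerivAt t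
      have : (fun s : ℝ => f (x₀ + s • v)) = fun s : ℝ => q.eval s := funext hq
      rw [this]
      exact h'
    exact hc.unique hc2
  have hdf2 : Differentiable ℝ (fderiv ℝ f) :=
    (hf.fderiv_right (m := 1) (by norm_num)).differentiable (by norm_num)
  have h2 : HasDerivAt (fun t : ℝ => fderiv ℝ f (x₀ + t • v))
      (fderiv ℝ (fderiv ℝ f) x₀ v) 0 := by
    have := ((hdf2 (x₀ + (0:ℝ) • v)).hasFDerivAt).comp_hasDerivAt 0 (hline 0)
    simp only [zero_smul, add_zero] at this
    exact this
  have h3 : HasDerivAt (fun t : ℝ => fderiv ℝ f (x₀ + t • v) v)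
      (fderiv ℝ (fderiv ℝ f) x₀ v v) 0 := by
    simpa using h2.clm_apply (hasDerivAt_const 0 v)
  have h4 : HasDerivAt (fun t : ℝ => q.derivative.eval t)
      (q.derivative.derivative.eval 0) 0 := q.derivative.hasDerivAt 0
  have hmain : fderiv ℝ (fderiv ℝ f) x₀ v v = q.derivative.derivative.eval 0 := by
    have h3' : HasDerivAt (fun t : ℝ => q.derivative.eval t)
        (fderiv ℝ (fderiv ℝ f) x₀ v v) 0 := by
      have : (fun t : ℝ => fderiv ℝ f (x₀ + t • v) v) = fun t : ℝ => q.derivative.eval t :=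
        funext h1
      rwa [this] at h3
    exact h3'.unique h4
  rw [iteratedFDeriv_two_apply]
  simpa using hmain

lemma aux_line {n : ℕ} (P : MvPolynomial (Fin n) ℝ) (f₀ : (Fin n → ℝ) → ℝ)
    (hf₀ : f₀ = fun x => MvPolynomial.eval x P) (a v : Fin n → ℝ) :
    ∃ q : Polynomial ℝ, ∀ t : ℝ, f₀ (a + t • v) = q.eval t := by
  refine ⟨MvPolynomial.aeval
    (fun i => Polynomial.C (a i) + Polynomial.C (v i) * Polynomial.X) P, fun t => ?_⟩
  rw [hf₀, aux_eval_aeval]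
  congr 1
  funext i
  simp only [Polynomial.eval_add, Polynomial.eval_mul, Polynomial.eval_C, Polynomial.eval_X,
    Pi.add_apply, Pi.smul_apply, smul_eq_mul]
  ring

lemma aux_key {n : ℕ} (P : MvPolynomial (Fin n) ℝ) (f₀ : (Fin n → ℝ) → ℝ)
    (hf₀ : f₀ = fun x => MvPolynomial.eval x P)
    (hconv : ConvexOn ℝ Set.univ f₀) (x₀ : Fin n → ℝ)
    (hPD : ∀ v : Fin n → ℝ, v ≠ 0 → 0 < iteratedFDeriv ℝ 2 f₀ x₀ ![v, v])
    (v : Fin n → ℝ) (hv : v ≠ 0) (c M : ℝ)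
    (hb : ∀ t : ℝ, 0 ≤ t → f₀ (x₀ + t • v) ≤ M + c * t) : False := by
  obtain ⟨q, hq⟩ := aux_line P f₀ hf₀ x₀ v
  have hq0 : f₀ x₀ = q.eval 0 := by simpa using hq 0
  have hlow : ∀ t : ℝ, 1 ≤ t → q.eval 0 + (q.eval 1 - q.eval 0) * t ≤ q.eval t := by
    intro t ht
    have ht0 : 0 < t := lt_of_lt_of_le one_pos ht
    have h1 := hconv.2 (Set.mem_univ x₀) (Set.mem_univ (x₀ + t • v))
      (show (0:ℝ) ≤ 1 - 1/t by rw [sub_nonneg, div_le_one ht0]; linarith)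
      (show (0:ℝ) ≤ 1/t by positivity) (show 1 - 1/t + 1/t = 1 by ring)
    have hxv : (1 - 1/t) • x₀ + (1/t) • (x₀ + t • v) = x₀ + (1:ℝ) • v := by
      match_scalars <;> field_simp <;> ring
    rw [hxv] at h1
    rw [hq 1, hq t, hq0] at h1
    simp only [smul_eq_mul] at h1
    have h1' : t * Polynomial.eval 1 q ≤ (t - 1) * Polynomial.eval 0 q + Polynomial.eval t q := by
      calc t * Polynomial.eval 1 q
          ≤ t * ((1 - 1/t) * Polynomial.eval 0 q + 1/t * Polynomial.eval t q) :=
            mul_le_mul_of_nonneg_left h1 ht0.le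
        _ = (t - 1) * Polynomial.eval 0 q + Polynomial.eval t q := by
            field_simp
    nlinarith [h1']
  have habs : ∀ t : ℝ, 1 ≤ t →
      |q.eval t| ≤ (|q.eval 0| + |q.eval 1| + |M|) + (|q.eval 0| + |q.eval 1| + |c|) * t := by
    intro t ht
    have h1 := hlow t ht
    have h2 : q.eval t ≤ M + c * t := by rw [← hq t]; exact hb t (by linarith)
    have ht0 : (0:ℝ) ≤ t := by linarith
    rw [abs_le]
    constructor
    · nlinarith [le_abs_self (q.eval 0), neg_abs_le (q.eval 0), le_abs_self (q.eval 1),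
        neg_abs_le (q.eval 1), abs_nonneg M, abs_nonneg c,
        mul_le_mul_of_nonneg_right (neg_abs_le (q.eval 0)) ht0,
        mul_le_mul_of_nonneg_right (neg_abs_le (q.eval 1)) ht0,
        mul_le_mul_of_nonneg_right (le_abs_self (q.eval 0)) ht0,
        mul_le_mul_of_nonneg_right (le_abs_self (q.eval 1)) ht0,
        mul_le_mul_of_nonneg_right (abs_nonneg c) ht0]
    · nlinarith [le_abs_self M, le_abs_self c, abs_nonneg (q.eval 0), abs_nonneg (q.eval 1),
        mul_le_mul_of_nonneg_right (le_abs_self c) ht0,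
        mul_le_mul_of_nonneg_right (abs_nonneg (q.eval 0)) ht0,
        mul_le_mul_of_nonneg_right (abs_nonneg (q.eval 1)) ht0]
  have hdeg := aux_deg_le_one q _ _ habs
  have hdd : q.derivative.derivative = 0 := by
    have h1 : q.derivative.natDegree = 0 := by
      have := q.natDegree_derivative_le
      omega
    obtain ⟨a, ha⟩ := Polynomial.natDegree_eq_zero.mp h1
    rw [← ha]
    simp
  have hbridge := aux_bridge f₀ (by rw [hf₀]; exact aux_contDiff P) x₀ v q hq
  have hpos := hPD v hv
  rw [hbridge, hdd] at hpos
  simp at hpos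

theorem coer {n : ℕ} (P : MvPolynomial (Fin n) ℝ)
    (f₀ : (Fin n → ℝ) → ℝ) (hf₀ : f₀ = fun x => MvPolynomial.eval x P)
    (hconv : ConvexOn ℝ Set.univ f₀)
    (x₀ : Fin n → ℝ)
    (hPD : ∀ v : Fin n → ℝ, v ≠ 0 → 0 < iteratedFDeriv ℝ 2 f₀ x₀ ![v, v]) :
    Filter.Tendsto f₀ (Filter.cocompact (Fin n → ℝ)) Filter.atTop := by
  have hcont : Continuous f₀ := by
    rw [hf₀]; exact (aux_contDiff P).continuous
  rw [← Metric.cobounded_eq_cocompact]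
  rw [Filter.tendsto_atTop]
  intro b
  rw [(Metric.hasBasis_cobounded_compl_closedBall x₀).eventually_iff]
  by_contra hcon
  push_neg at hcon
  have hseq : ∀ k : ℕ, ∃ x : Fin n → ℝ, (k : ℝ) + 1 ≤ dist x x₀ ∧ f₀ x < b := by
    intro k
    obtain ⟨x, hx1, hx2⟩ := hcon ((k : ℝ) + 1) trivial
    refine ⟨x, ?_, by linarith [hx2]⟩
    have : ¬ dist x x₀ ≤ (k : ℝ) + 1 := by simpa [Metric.mem_closedBall] using hx1
    linarith [not_le.mp this]
  choose x hx1 hx2 using hseq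
  have hRpos : ∀ k : ℕ, 0 < dist (x k) x₀ := fun k =>
    lt_of_lt_of_le (by positivity) (hx1 k)
  set u : ℕ → (Fin n → ℝ) := fun k => (dist (x k) x₀)⁻¹ • (x k - x₀) with hu
  have hum : ∀ k, u k ∈ Metric.sphere (0 : Fin n → ℝ) 1 := by
    intro k
    rw [mem_sphere_zero_iff_norm, hu]
    rw [norm_smul, norm_inv, Real.norm_eq_abs, abs_of_pos (hRpos k), ← dist_eq_norm]
    rw [inv_mul_eq_div, div_self (hRpos k).ne']
  obtain ⟨w, hw_mem, φ, hφ_mono, hφ_tendsto⟩ :=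
    (isCompact_sphere (0 : Fin n → ℝ) 1).tendsto_subseq hum
  have hw_ne : w ≠ 0 := by
    rw [mem_sphere_zero_iff_norm] at hw_mem
    intro h0; rw [h0] at hw_mem; simp at hw_mem
  set M : ℝ := max (f₀ x₀) b with hM
  have hbound : ∀ t : ℝ, 0 ≤ t → f₀ (x₀ + t • w) ≤ M + 0 * t := by
    intro t ht
    have hc2 : Continuous fun z : Fin n → ℝ => f₀ (x₀ + t • z) := by fun_prop
    have hlim : Tendsto (fun k => f₀ (x₀ + t • u (φ k))) atTop (𝓝 (f₀ (x₀ + t • w))) :=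
      ((hc2.tendsto w).comp hφ_tendsto)
    rw [zero_mul, add_zero]
    refine le_of_tendsto hlim ?_
    rw [eventually_atTop]
    refine ⟨⌈t⌉₊, fun k hk => ?_⟩
    have hRt : t ≤ dist (x (φ k)) x₀ := by
      have h1 : (k : ℝ) ≤ (φ k : ℝ) := by exact_mod_cast hφ_mono.le_apply
      have h2 : t ≤ (⌈t⌉₊ : ℝ) := Nat.le_ceil t
      have h3 : ((⌈t⌉₊ : ℕ) : ℝ) ≤ (k : ℝ) := by exact_mod_cast hk
      have := hx1 (φ k)
      linarith
    have hR0 : 0 < dist (x (φ k)) x₀ := hRpos (φ k)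
    have hs0 : 0 ≤ t / dist (x (φ k)) x₀ := div_nonneg ht hR0.le
    have hs1 : t / dist (x (φ k)) x₀ ≤ 1 := by rw [div_le_one hR0]; exact hRt
    have hco := hconv.2 (Set.mem_univ x₀) (Set.mem_univ (x (φ k)))
      (show (0:ℝ) ≤ 1 - t / dist (x (φ k)) x₀ by linarith) hs0 (by ring)
    have hid : (1 - t / dist (x (φ k)) x₀) • x₀ + (t / dist (x (φ k)) x₀) • (x (φ k))
        = x₀ + t • u (φ k) := by
      simp only [hu]
      have h0 : dist (x (φ k)) x₀ ≠ 0 := hR0.ne'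
      match_scalars <;> (field_simp; try ring)
    rw [hid] at hco
    have hfx : f₀ (x (φ k)) ≤ M := le_trans (hx2 (φ k)).le (le_max_right _ _)
    have hfx0 : f₀ x₀ ≤ M := le_max_left _ _
    calc f₀ (x₀ + t • u (φ k)) ≤ (1 - t / dist (x (φ k)) x₀) • f₀ x₀
          + (t / dist (x (φ k)) x₀) • f₀ (x (φ k)) := hco
      _ ≤ (1 - t / dist (x (φ k)) x₀) * M + (t / dist (x (φ k)) x₀) * M := by
          simp only [smul_eq_mul]
          have h1 : (1 - t / dist (x (φ k)) x₀) * f₀ x₀ ≤ (1 - t / dist (x (φ k)) x₀) * M :=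
            mul_le_mul_of_nonneg_left hfx0 (by linarith)
          have h2 : (t / dist (x (φ k)) x₀) * f₀ (x (φ k)) ≤ (t / dist (x (φ k)) x₀) * M :=
            mul_le_mul_of_nonneg_left hfx hs0
          linarith
      _ = M := by ring
  exact absurd (aux_key P f₀ hf₀ hconv x₀ hPD w hw_ne 0 M hbound) (by simp)

theorem strict {n : ℕ} (P : MvPolynomial (Fin n) ℝ)
    (f₀ : (Fin n → ℝ) → ℝ) (hf₀ : f₀ = fun x => MvPolynomial.eval x P)
    (hconv : ConvexOn ℝ Set.univ f₀)
    (x₀ : Fin n → ℝ)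
    (hPD : ∀ v : Fin n → ℝ, v ≠ 0 → 0 < iteratedFDeriv ℝ 2 f₀ x₀ ![v, v]) :
    StrictConvexOn ℝ Set.univ f₀ := by
  refine ⟨convex_univ, ?_⟩
  intro p hp y hy hpy a b ha hb hab
  by_contra hle
  push_neg at hle
  have hco := hconv.2 hp hy ha.le hb.le hab
  have heq : f₀ (a • p + b • y) = a * f₀ p + b * f₀ y := by
    simp only [smul_eq_mul] at hco hle
    linarith
  set v : Fin n → ℝ := y - p with hv
  have hvne : v ≠ 0 := sub_ne_zero.mpr (Ne.symm hpy)
  obtain ⟨q, hq⟩ := aux_line P f₀ hf₀ p v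
  have hq0 : q.eval 0 = f₀ p := by simpa using (hq 0).symm
  have hq1 : q.eval 1 = f₀ y := by
    have h := hq 1
    rw [one_smul, hv, add_sub_cancel] at h
    exact h.symm
  have hb1 : b < 1 := by linarith
  have hidb : a • p + b • y = p + b • v := by
    rw [hv]; match_scalars <;> linarith
  have hqb : q.eval b = a * q.eval 0 + b * q.eval 1 := by
    rw [hq0, hq1, ← heq, hidb, hq b]
  have key2 : ∀ s : ℝ, 0 < s → s < 1 →
      q.eval s = (1 - s) * q.eval 0 + s * q.eval 1 := by
    intro s hs0 hs1
    have hupper : q.eval s ≤ (1 - s) * q.eval 0 + s * q.eval 1 := by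
      have hco2 := hconv.2 hp hy (show (0:ℝ) ≤ 1 - s by linarith) hs0.le (by ring)
      have hid : (1 - s) • p + s • y = p + s • v := by
        rw [hv]; match_scalars <;> ring
      rw [hid, hq s] at hco2
      simpa [hq0, hq1, smul_eq_mul] using hco2
    have hlower : (1 - s) * q.eval 0 + s * q.eval 1 ≤ q.eval s := by
      rcases le_or_gt s b with hsb | hbs
      · set l : ℝ := (b - s)/(1 - s) with hl
        have h1s : (0:ℝ) < 1 - s := by linarith
        have hl0 : 0 ≤ l := div_nonneg (by linarith) h1s.le
        have hl1 : l < 1 := by rw [hl, div_lt_one h1s]; linarith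
        have hls : (1 - l) * s + l = b := by rw [hl]; field_simp; try ring
        have hco3 := hconv.2 (Set.mem_univ (p + s • v)) hy
          (show (0:ℝ) ≤ 1 - l by linarith) hl0 (by ring)
        have hid : (1 - l) • (p + s • v) + l • y = p + b • v := by
          rw [hv]; match_scalars <;> nlinarith [hls]
        rw [hid, hq b, hq s] at hco3
        simp only [smul_eq_mul, ← hq1] at hco3
        have hchord : (1 - l) * ((1 - s) * q.eval 0 + s * q.eval 1) + l * q.eval 1
            = a * q.eval 0 + b * q.eval 1 := by
          linear_combination (q.eval 1 - q.eval 0) * hls - q.eval 0 * hab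
        have h5 : (1 - l) * ((1 - s) * q.eval 0 + s * q.eval 1) ≤ (1 - l) * q.eval s := by
          rw [hqb] at hco3
          linarith
        exact le_of_mul_le_mul_left h5 (by linarith)
      · set l : ℝ := (s - b)/s with hl
        have hl0 : 0 ≤ l := div_nonneg (by linarith) hs0.le
        have hl1 : l < 1 := by rw [hl, div_lt_one hs0]; linarith
        have hls : (1 - l) * s = b := by rw [hl]; field_simp; try ring
        have hco3 := hconv.2 hp (Set.mem_univ (p + s • v))
          hl0 (show (0:ℝ) ≤ 1 - l by linarith) (by ring)
        have hid : l • p + (1 - l) • (p + s • v) = p + b • v := by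
          rw [hv]; match_scalars <;> nlinarith [hls]
        rw [hid, hq b, hq s] at hco3
        simp only [smul_eq_mul, ← hq0] at hco3
        have hchord : l * q.eval 0 + (1 - l) * ((1 - s) * q.eval 0 + s * q.eval 1)
            = a * q.eval 0 + b * q.eval 1 := by
          linear_combination (q.eval 1 - q.eval 0) * hls - q.eval 0 * hab
        have h5 : (1 - l) * ((1 - s) * q.eval 0 + s * q.eval 1) ≤ (1 - l) * q.eval s := by
          rw [hqb] at hco3
          linarith
        exact le_of_mul_le_mul_left h5 (by linarith)
    linarith
  have hr0 : q - (Polynomial.C (q.eval 0) + Polynomial.C (q.eval 1 - q.eval 0) * Polynomial.X)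
      = 0 := by
    apply Polynomial.eq_zero_of_infinite_isRoot
    apply Set.Infinite.mono ?_ (Set.Ioo_infinite (by norm_num : (0:ℝ) < 1))
    intro s hs
    obtain ⟨hs0, hs1⟩ := hs
    simp only [Set.mem_setOf_eq, Polynomial.IsRoot, Polynomial.eval_sub, Polynomial.eval_add,
      Polynomial.eval_mul, Polynomial.eval_C, Polynomial.eval_X]
    rw [key2 s hs0 hs1]; ring
  have hqt : ∀ t : ℝ, q.eval t = q.eval 0 + (q.eval 1 - q.eval 0) * t := by
    intro t
    have hqe : q = Polynomial.C (q.eval 0) + Polynomial.C (q.eval 1 - q.eval 0) * Polynomial.X :=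
      sub_eq_zero.mp hr0
    conv_lhs => rw [hqe]
    simp
  have hb2 : ∀ t : ℝ, 0 ≤ t → f₀ (x₀ + t • v) ≤
      ((1/2) * f₀ ((2:ℝ) • x₀ - p) + (1/2) * q.eval 0) + (q.eval 1 - q.eval 0) * t := by
    intro t ht
    have hco5 := hconv.2 (Set.mem_univ ((2:ℝ) • x₀ - p)) (Set.mem_univ (p + (2*t) • v))
      (by norm_num : (0:ℝ) ≤ 1/2) (by norm_num : (0:ℝ) ≤ 1/2) (by norm_num)
    have hid : (1/2 : ℝ) • ((2:ℝ) • x₀ - p) + (1/2 : ℝ) • (p + (2*t) • v) = x₀ + t • v := by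
      match_scalars <;> ring
    rw [hid] at hco5
    rw [hq (2*t), hqt (2*t)] at hco5
    simp only [smul_eq_mul] at hco5
    linarith
  exact aux_key P f₀ hf₀ hconv x₀ hPD v hvne _ _ hb2

theorem stmt_2 {n : ℕ} (P : MvPolynomial (Fin n) ℝ)
    (f₀ : (Fin n → ℝ) → ℝ) (hf₀ : f₀ = fun x => MvPolynomial.eval x P)
    (hconv : ConvexOn ℝ Set.univ f₀)
    (x₀ : Fin n → ℝ)
    (hPD : ∀ v : Fin n → ℝ, v ≠ 0 → 0 < iteratedFDeriv ℝ 2 f₀ x₀ ![v, v]) :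
    Filter.Tendsto f₀ (Filter.cocompact (Fin n → ℝ)) Filter.atTop ∧
      StrictConvexOn ℝ Set.univ f₀ := by
  exact ⟨coer P f₀ hf₀ hconv x₀ hPD, strict P f₀ hf₀ hconv x₀ hPD⟩
end

section
/- Let f₀ and g₁,…,g_m be convex polynomials on ℝ^n, and let K = {x ∈ ℝ^n : g_i(x) ≤ 0, i = 1,…,m} be nonempty. If inf_{x ∈ K} f₀(x) > −∞, then the infimum is attained, i.e., there exists x̄ ∈ K with f₀(x̄) = inf_{x ∈ K} f₀(x). -/
open Filter Topology Polynomial Set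


private lemma slope_zero_of_forall_le {c a e : ℝ} (h : ∀ t : ℝ, c ≤ a + e * t) : e = 0 := by
  by_contra he
  have h1 := h ((c - a - 1) / e)
  have h2 : e * ((c - a - 1) / e) = c - a - 1 := by field_simp
  linarith

private lemma poly_ray_affine (p : Polynomial ℝ)
    (hc : ConvexOn ℝ Set.univ fun t : ℝ => p.eval t)
    (hb : ∀ t : ℝ, 0 ≤ t → p.eval t ≤ p.eval 0) :
    p.eval 1 - p.eval 0 ≤ 0 ∧ ∀ t : ℝ, p.eval t = p.eval 0 + (p.eval 1 - p.eval 0) * t := by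
  have hdiff : ∀ x : ℝ, DifferentiableAt ℝ (fun t : ℝ => p.eval t) x := fun x =>
    p.differentiable.differentiableAt
  have hderiv : deriv (fun t : ℝ => p.eval t) = fun t => p.derivative.eval t :=
    funext fun x => Polynomial.deriv p
  have hmono : Monotone fun t : ℝ => p.derivative.eval t := by
    rw [← hderiv]
    exact monotoneOn_univ.mp (hc.monotoneOn_deriv fun x _ => hdiff x)
  -- derivative is ≤ 0 on [0, ∞)
  have hdneg : ∀ t : ℝ, 0 ≤ t → p.derivative.eval t ≤ 0 := by
    intro t ht
    refine le_of_forall_pos_le_add ?_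
    intro ε hε
    set s : ℝ := t + max 1 ((p.eval 0 - p.eval t) / ε) with hs
    clear_value s
    have hm1 : (1:ℝ) ≤ max 1 ((p.eval 0 - p.eval t) / ε) := le_max_left _ _
    have hts : t < s := by simp only [hs]; linarith
    have hslope := hc.deriv_le_slope (mem_univ t) (mem_univ s) hts (hdiff t)
    rw [hderiv, slope_def_field] at hslope
    have hst : (0:ℝ) < s - t := by linarith
    have hps : p.eval s ≤ p.eval 0 := hb s (by linarith)
    have hkey : (p.eval s - p.eval t) / (s - t) ≤ 0 + ε := by
      rcases le_or_gt (p.eval 0 - p.eval t) 0 with hA | hA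
      · have : (p.eval s - p.eval t) / (s - t) ≤ 0 :=
          div_nonpos_of_nonpos_of_nonneg (by linarith) hst.le
        linarith
      · have hst2 : (p.eval 0 - p.eval t) / ε ≤ s - t := by
          simp only [hs]
          have := le_max_right (1:ℝ) ((p.eval 0 - p.eval t) / ε)
          linarith
        have hkey2 : (p.eval s - p.eval t) / (s - t) ≤ ε := by
          rw [div_le_iff₀ hst]
          have h3 : ε * ((p.eval 0 - p.eval t) / ε) = p.eval 0 - p.eval t := by field_simp
          have h4 : ε * ((p.eval 0 - p.eval t) / ε) ≤ ε * (s - t) :=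
            mul_le_mul_of_nonneg_left hst2 hε.le
          linarith
        linarith
    exact le_trans hslope hkey
  have hd0 : p.derivative.eval 0 ≤ 0 := hdneg 0 le_rfl
  -- derivative is a constant polynomial
  have hdegle : p.derivative.degree ≤ 0 := by
    by_contra hdeg
    push_neg at hdeg
    have habs := Polynomial.abs_tendsto_atTop p.derivative hdeg
    have hev : ∀ᶠ t : ℝ in atTop, |p.derivative.eval 0| + 1 ≤ |p.derivative.eval t| :=
      habs.eventually_ge_atTop _
    obtain ⟨t, ht1, ht0⟩ := (hev.and (eventually_ge_atTop (0:ℝ))).exists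
    have h1 : p.derivative.eval 0 ≤ p.derivative.eval t := hmono ht0
    have h2 : p.derivative.eval t ≤ 0 := hdneg t ht0
    rw [abs_of_nonpos h2, abs_of_nonpos hd0] at ht1
    linarith
  have hC : p.derivative = C (p.derivative.coeff 0) := Polynomial.eq_C_of_degree_le_zero hdegle
  set c := p.derivative.coeff 0 with hcdef
  have hcneg : c ≤ 0 := by
    have := hd0
    rw [hC] at this
    simpa using this
  have hrd : (p - C c * X).derivative = 0 := by
    rw [derivative_sub, derivative_C_mul, derivative_X, mul_one, ← hC, sub_self]
  have hr : p - C c * X = C ((p - C c * X).coeff 0) := Polynomial.eq_C_of_derivative_eq_zero hrd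
  have heval : ∀ t : ℝ, p.eval t = p.eval 0 + c * t := by
    intro t
    have h1 : (p - C c * X).eval t = (p - C c * X).eval 0 := by
      rw [hr]; simp
    simp only [eval_sub, eval_mul, eval_C, eval_X] at h1
    linarith
  have hc1 : c = p.eval 1 - p.eval 0 := by have := heval 1; linarith
  constructor
  · rw [← hc1]; exact hcneg
  · intro t; rw [← hc1]; exact heval t

private lemma convexOn_comp_line {n : ℕ} {g : (Fin n → ℝ) → ℝ} (hg : ConvexOn ℝ Set.univ g)
    (x d : Fin n → ℝ) : ConvexOn ℝ Set.univ fun t : ℝ => g (x + t • d) := by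
  refine ⟨convex_univ, ?_⟩
  intro s _ u _ a b ha hb hab
  have h := hg.2 (Set.mem_univ (x + s • d)) (Set.mem_univ (x + u • d)) ha hb hab
  simp only [smul_eq_mul]
  show g (x + (a * s + b * u) • d) ≤ a • g (x + s • d) + b • g (x + u • d)
  have hx : x + (a * s + b * u) • d = a • (x + s • d) + b • (x + u • d) := by
    have h1 : a • (x + s • d) + b • (x + u • d)
        = (a + b) • x + (a * s + b * u) • d := by module
    rw [h1, hab, one_smul]
  rw [hx]
  exact h

private lemma eval_line_poly {n : ℕ} (Q : MvPolynomial (Fin n) ℝ) (x d : Fin n → ℝ) (t : ℝ) :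
    Polynomial.eval t (MvPolynomial.aeval
        (fun i => Polynomial.C (x i) + Polynomial.X * Polynomial.C (d i)) Q)
      = MvPolynomial.eval (x + t • d) Q := by
  rw [← Polynomial.coe_aeval_eq_eval, MvPolynomial.comp_aeval_apply]
  have h1 : (fun i => (Polynomial.aeval t) (Polynomial.C (x i) + Polynomial.X * Polynomial.C (d i)))
      = x + t • d := by
    funext i
    simp [smul_eq_mul]
    ring
  rw [h1, MvPolynomial.aeval_def, Algebra.algebraMap_self]
  rfl

private lemma affine_along_d {n : ℕ} (Q : MvPolynomial (Fin n) ℝ)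
    (hc : ConvexOn ℝ Set.univ fun x => MvPolynomial.eval x Q) (d : Fin n → ℝ)
    (hray : ∀ x : Fin n → ℝ, ∀ t : ℝ, 0 ≤ t →
      MvPolynomial.eval (x + t • d) Q ≤ MvPolynomial.eval x Q) :
    ∃ b : ℝ, b ≤ 0 ∧ ∀ x t, MvPolynomial.eval (x + t • d) Q = MvPolynomial.eval x Q + b * t := by
  set g : (Fin n → ℝ) → ℝ := fun x => MvPolynomial.eval x Q with hgdef
  set B : (Fin n → ℝ) → ℝ := fun x => g (x + d) - g x with hBdef
  have key : ∀ x : Fin n → ℝ, B x ≤ 0 ∧ ∀ t : ℝ, g (x + t • d) = g x + B x * t := by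
    intro x
    set p := MvPolynomial.aeval
      (fun i => Polynomial.C (x i) + Polynomial.X * Polynomial.C (d i)) Q with hpdef
    have hev : ∀ t, p.eval t = g (x + t • d) := fun t => eval_line_poly Q x d t
    have h0 : p.eval 0 = g x := by rw [hev]; simp
    have h1 : p.eval 1 = g (x + d) := by rw [hev]; simp
    have hcp : ConvexOn ℝ Set.univ fun t : ℝ => p.eval t := by
      have hcl := convexOn_comp_line hc x d
      have : (fun t : ℝ => p.eval t) = fun t : ℝ => g (x + t • d) := funext hev
      rw [this]
      exact hcl
    have hbp : ∀ t : ℝ, 0 ≤ t → p.eval t ≤ p.eval 0 := by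
      intro t ht; rw [hev, h0]; exact hray x t ht
    obtain ⟨hb1, hb2⟩ := poly_ray_affine p hcp hbp
    rw [h0, h1] at hb1
    refine ⟨hb1, fun t => ?_⟩
    have := hb2 t
    rw [hev, h0, h1] at this
    exact this
  clear_value B g
  have hconst : ∀ x y : Fin n → ℝ, B x = B y := by
    intro x y
    have hmid : ∀ t : ℝ, g ((1/2 : ℝ) • (x + y)) ≤
        (g x + g y) / 2 + ((B x - B y) / 2) * t := by
      intro t
      have h2 := hc.2 (Set.mem_univ (x + t • d)) (Set.mem_univ (y + (-t) • d))
        (by norm_num : (0:ℝ) ≤ 1/2) (by norm_num : (0:ℝ) ≤ 1/2) (by norm_num : (1/2:ℝ) + 1/2 = 1)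
      have hpt : (1/2 : ℝ) • (x + t • d) + (1/2 : ℝ) • (y + (-t) • d)
          = (1/2 : ℝ) • (x + y) := by module
      rw [hpt] at h2
      have ex : g (x + t • d) = g x + B x * t := (key x).2 t
      have ey : g (y + (-t) • d) = g y + B y * (-t) := (key y).2 (-t)
      rw [ex, ey] at h2
      simp only [smul_eq_mul] at h2
      linarith
    have := slope_zero_of_forall_le (c := g ((1/2 : ℝ) • (x + y))) (a := (g x + g y)/2)
      (e := (B x - B y)/2) hmid
    have hxy : B x - B y = 0 := by linarith
    linarith
  refine ⟨B 0, (key 0).1, fun x t => ?_⟩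
  have := (key x).2 t
  rw [hconst x 0] at this
  simpa [hgdef] using this

private lemma ray_le {n : ℕ} {g : (Fin n → ℝ) → ℝ} (hg : ConvexOn ℝ Set.univ g)
    (hcont : Continuous g) (u : ℕ → Fin n → ℝ) (d : Fin n → ℝ)
    (hnorm : Tendsto (fun k => ‖u k‖) atTop atTop)
    (hdir : Tendsto (fun k => ‖u k‖⁻¹ • u k) atTop (nhds d))
    (C : ℝ) (hub : ∀ k, g (u k) ≤ C) :
    ∀ (x : Fin n → ℝ) (t : ℝ), 0 ≤ t → g (x + t • d) ≤ g x := by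
  intro x t ht
  rcases eq_or_lt_of_le ht with rfl | ht
  · simp
  -- norms of u k - x tend to infinity
  have hnx : Tendsto (fun k => ‖u k - x‖) atTop atTop := by
    refine tendsto_atTop_mono (fun k => norm_sub_norm_le (u k) x) ?_
    simpa [sub_eq_add_neg] using tendsto_atTop_add_const_right atTop (-‖x‖) hnorm
  have hinv : Tendsto (fun k => ‖u k - x‖⁻¹) atTop (nhds 0) :=
    tendsto_inv_atTop_zero.comp hnx
  have hninv : Tendsto (fun k => ‖u k‖⁻¹) atTop (nhds 0) :=
    tendsto_inv_atTop_zero.comp hnorm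
  -- the normalized directions of u k - x also tend to d
  have hvdir : Tendsto (fun k => ‖u k - x‖⁻¹ • (u k - x)) atTop (nhds d) := by
    have hA : Tendsto (fun k => ‖u k‖ * ‖u k - x‖⁻¹) atTop (nhds 1) := by
      have hub' : ∀ᶠ k in atTop, ‖u k‖ * ‖u k - x‖⁻¹ ≤ 1 + ‖x‖ * ‖u k - x‖⁻¹ := by
        filter_upwards [hnx.eventually_gt_atTop 0] with k hk
        have h1 : ‖u k‖ ≤ ‖u k - x‖ + ‖x‖ := by
          have := norm_add_le (u k - x) x
          simpa using this
        have h2 : ‖u k - x‖ * ‖u k - x‖⁻¹ = 1 := mul_inv_cancel₀ hk.ne'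
        nlinarith [inv_nonneg.mpr hk.le]
      have hlb' : ∀ᶠ k in atTop, 1 - ‖x‖ * ‖u k - x‖⁻¹ ≤ ‖u k‖ * ‖u k - x‖⁻¹ := by
        filter_upwards [hnx.eventually_gt_atTop 0] with k hk
        have h1 : ‖u k - x‖ - ‖x‖ ≤ ‖u k‖ := by
          have := norm_sub_norm_le (u k - x) (-x)
          simp only [sub_neg_eq_add, sub_add_cancel, norm_neg] at this
          linarith
        have h2 : ‖u k - x‖ * ‖u k - x‖⁻¹ = 1 := mul_inv_cancel₀ hk.ne'
        nlinarith [inv_nonneg.mpr hk.le]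
      have hxz : Tendsto (fun k => ‖x‖ * ‖u k - x‖⁻¹) atTop (nhds 0) := by
        simpa using hinv.const_mul ‖x‖
      have hlo : Tendsto (fun k => 1 - ‖x‖ * ‖u k - x‖⁻¹) atTop (nhds 1) := by
        simpa using tendsto_const_nhds.sub hxz
      have hhi : Tendsto (fun k => 1 + ‖x‖ * ‖u k - x‖⁻¹) atTop (nhds 1) := by
        simpa using tendsto_const_nhds.add hxz
      exact tendsto_of_tendsto_of_tendsto_of_le_of_le' hlo hhi hlb' hub'
    have hmain : Tendsto
        (fun k => (‖u k‖ * ‖u k - x‖⁻¹) • (‖u k‖⁻¹ • u k) - ‖u k - x‖⁻¹ • x)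
        atTop (nhds d) := by
      have h1 := hA.smul hdir
      have h2 := hinv.smul_const x
      have := h1.sub h2
      simpa using this
    refine hmain.congr' ?_
    filter_upwards [hnorm.eventually_gt_atTop 0] with k hk
    have hk' : ‖u k‖ ≠ 0 := hk.ne'
    rw [smul_smul, smul_sub]
    congr 1
    congr 1
    rw [mul_comm ‖u k‖ ‖u k - x‖⁻¹, mul_assoc, mul_inv_cancel₀ hk', mul_one]
  -- the combination points tend to x + t • d
  have hp : Tendsto (fun k => x + t • (‖u k - x‖⁻¹ • (u k - x))) atTop
      (nhds (x + t • d)) :=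
    tendsto_const_nhds.add (hvdir.const_smul t)
  -- convexity inequality along the sequence
  have hineq : ∀ᶠ k in atTop,
      g (x + t • (‖u k - x‖⁻¹ • (u k - x)))
        ≤ (1 - t * ‖u k - x‖⁻¹) * g x + (t * ‖u k - x‖⁻¹) * C := by
    filter_upwards [hnx.eventually_ge_atTop (max t 1)] with k hk
    have hkpos : (0:ℝ) < ‖u k - x‖ := lt_of_lt_of_le (by positivity) hk
    set lam := t * ‖u k - x‖⁻¹ with hlam
    have hlam0 : 0 ≤ lam := by positivity
    have hlam1 : lam ≤ 1 := by
      rw [hlam]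
      rw [← mul_inv_cancel₀ hkpos.ne']
      have := le_trans (le_max_left t 1) hk
      exact mul_le_mul_of_nonneg_right this (inv_nonneg.mpr hkpos.le)
    have hcvx := hg.2 (Set.mem_univ x) (Set.mem_univ (u k))
      (by linarith : (0:ℝ) ≤ 1 - lam) hlam0 (by ring)
    have hptk : (1 - lam) • x + lam • u k = x + t • (‖u k - x‖⁻¹ • (u k - x)) := by
      rw [smul_smul, ← hlam]
      module
    rw [hptk] at hcvx
    refine le_trans hcvx ?_
    simp only [smul_eq_mul]
    have := hub k
    nlinarith
  -- pass to the limit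
  have hrhs : Tendsto (fun k => (1 - t * ‖u k - x‖⁻¹) * g x + (t * ‖u k - x‖⁻¹) * C)
      atTop (nhds (g x)) := by
    have hl : Tendsto (fun k => t * ‖u k - x‖⁻¹) atTop (nhds 0) := by
      simpa using hinv.const_mul t
    have h5 : Tendsto (fun k => (1 - t * ‖u k - x‖⁻¹) * g x + (t * ‖u k - x‖⁻¹) * C)
        atTop (nhds ((1 - 0) * g x + 0 * C)) :=
      ((tendsto_const_nhds.sub hl).mul tendsto_const_nhds).add (hl.mul tendsto_const_nhds)
    simpa using h5
  have hlhs : Tendsto (fun k => g (x + t • (‖u k - x‖⁻¹ • (u k - x)))) atTop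
      (nhds (g (x + t • d))) := (hcont.tendsto _).comp hp
  exact le_of_tendsto_of_tendsto hlhs hrhs hineq

private lemma mv_aeval_eq_eval {σ : Type*} (v : σ → ℝ) (q : MvPolynomial σ ℝ) :
    MvPolynomial.aeval v q = MvPolynomial.eval v q := by
  rw [MvPolynomial.aeval_def, Algebra.algebraMap_self]; rfl

private lemma insertNth_comb {n : ℕ} (kc : Fin (n+1)) (a b : ℝ) (y z : Fin n → ℝ) :
    (Fin.insertNth kc (0:ℝ) (a • y + b • z) : Fin (n+1) → ℝ)
      = a • (Fin.insertNth kc (0:ℝ) y : Fin (n+1) → ℝ)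
        + b • (Fin.insertNth kc (0:ℝ) z : Fin (n+1) → ℝ) := by
  funext j
  rcases eq_or_ne j kc with rfl | hj
  · simp
  · obtain ⟨l, rfl⟩ := Fin.exists_succAbove_eq hj
    simp

private lemma eval_subst {n : ℕ} (kc : Fin (n+1)) (Q : MvPolynomial (Fin (n+1)) ℝ)
    (y : Fin n → ℝ) :
    MvPolynomial.eval y
        (MvPolynomial.aeval
          (Fin.insertNth kc (0 : MvPolynomial (Fin n) ℝ) fun j => MvPolynomial.X j) Q)
      = MvPolynomial.eval (Fin.insertNth kc (0:ℝ) y) Q := by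
  rw [← mv_aeval_eq_eval,
    MvPolynomial.comp_aeval_apply (φ := MvPolynomial.aeval (R := ℝ) y)]
  have h1 : (fun i => MvPolynomial.aeval (R := ℝ) y
      ((Fin.insertNth kc (0 : MvPolynomial (Fin n) ℝ) fun j => MvPolynomial.X j :
        Fin (n+1) → MvPolynomial (Fin n) ℝ) i))
      = Fin.insertNth kc (0:ℝ) y := by
    funext i
    rcases eq_or_ne i kc with rfl | hi
    · simp
    · obtain ⟨l, rfl⟩ := Fin.exists_succAbove_eq hi
      simp
  rw [h1]
  exact mv_aeval_eq_eval _ _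

private lemma main_aux : ∀ (n m : ℕ) (P : MvPolynomial (Fin n) ℝ)
    (G : Fin m → MvPolynomial (Fin n) ℝ),
    ConvexOn ℝ Set.univ (fun x => MvPolynomial.eval x P) →
    (∀ i, ConvexOn ℝ Set.univ (fun x => MvPolynomial.eval x (G i))) →
    {x : Fin n → ℝ | ∀ i, MvPolynomial.eval x (G i) ≤ 0}.Nonempty →
    (∃ c : ℝ, ∀ x ∈ {x : Fin n → ℝ | ∀ i, MvPolynomial.eval x (G i) ≤ 0},
      c ≤ MvPolynomial.eval x P) →
    ∃ xb ∈ {x : Fin n → ℝ | ∀ i, MvPolynomial.eval x (G i) ≤ 0},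
      ∀ x ∈ {x : Fin n → ℝ | ∀ i, MvPolynomial.eval x (G i) ≤ 0},
        MvPolynomial.eval xb P ≤ MvPolynomial.eval x P := by
  intro n
  induction n with
  | zero =>
    intro m P G _ _ hne _
    obtain ⟨x0, hx0⟩ := hne
    refine ⟨x0, hx0, fun x hx => ?_⟩
    have hxx : x = x0 := Subsingleton.elim x x0
    rw [hxx]
  | succ n ih =>
    intro m P G hcP hcG hne hbdd
    classical
    obtain ⟨c, hc⟩ := hbdd
    set f : (Fin (n+1) → ℝ) → ℝ := fun x => MvPolynomial.eval x P with hf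
    set K : Set (Fin (n+1) → ℝ) := {x | ∀ i, MvPolynomial.eval x (G i) ≤ 0} with hK
    have hfc : Continuous f := MvPolynomial.continuous_eval P
    have hgc : ∀ i, Continuous fun x : Fin (n+1) → ℝ => MvPolynomial.eval x (G i) :=
      fun i => MvPolynomial.continuous_eval _
    have hKclosed : IsClosed K := by
      have hKi : K = ⋂ i, {x : Fin (n+1) → ℝ | MvPolynomial.eval x (G i) ≤ 0} := by
        ext x; simp [hK]
      rw [hKi]
      exact isClosed_iInter fun i => isClosed_le (hgc i) continuous_const
    have hKim : (f '' K).Nonempty := hne.image f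
    have hbb : BddBelow (f '' K) := by
      refine ⟨c, fun y hy => ?_⟩
      obtain ⟨x, hx, rfl⟩ := hy
      exact hc x hx
    set μ := sInf (f '' K) with hμ
    have hμle : ∀ x ∈ K, μ ≤ f x := fun x hx => csInf_le hbb ⟨x, hx, rfl⟩
    have hseq : ∀ k : ℕ, ∃ x, x ∈ K ∧ f x < μ + 1/((k:ℝ)+1) := by
      intro k
      obtain ⟨a, ha, hlt⟩ := Real.lt_sInf_add_pos hKim
        (by positivity : (0:ℝ) < 1/((k:ℝ)+1))
      obtain ⟨x, hx, rfl⟩ := ha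
      exact ⟨x, hx, hlt⟩
    choose xs hxsK hxslt using hseq
    by_cases hbnd : ∀ C : ℝ, {k : ℕ | ‖xs k‖ ≤ C}.Finite
    · -- Case B : the minimizing sequence escapes to infinity
      have hnorm : Tendsto (fun k => ‖xs k‖) atTop atTop := by
        rw [tendsto_atTop]
        intro bb
        rw [← Nat.cofinite_eq_atTop, Filter.eventually_cofinite]
        refine (hbnd bb).subset fun k hk => ?_
        simp only [Set.mem_setOf_eq, not_le] at hk ⊢
        exact hk.le
      set v : ℕ → Fin (n+1) → ℝ := fun k => ‖xs k‖⁻¹ • xs k with hv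
      have hvball : ∀ k, v k ∈ Metric.closedBall (0 : Fin (n+1) → ℝ) 1 := by
        intro k
        simp only [Metric.mem_closedBall, dist_zero_right, hv, norm_smul, norm_inv, norm_norm]
        rcases eq_or_ne ‖xs k‖ 0 with h | h
        · simp [h]
        · rw [inv_mul_cancel₀ h]
      obtain ⟨d, -, ψ, hψmono, hψ⟩ :=
        tendsto_subseq_of_bounded Metric.isBounded_closedBall hvball
      have hψtop : Tendsto ψ atTop atTop := hψmono.tendsto_atTop
      set u : ℕ → Fin (n+1) → ℝ := fun j => xs (ψ j) with hu
      have hunorm : Tendsto (fun j => ‖u j‖) atTop atTop := hnorm.comp hψtop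
      have hudir : Tendsto (fun j => ‖u j‖⁻¹ • u j) atTop (nhds d) := hψ
      have hd1 : ‖d‖ = 1 := by
        have h1 : Tendsto (fun j => ‖v (ψ j)‖) atTop (nhds ‖d‖) :=
          (continuous_norm.tendsto d).comp hψ
        have h2 : ∀ᶠ j in atTop, ‖v (ψ j)‖ = 1 := by
          filter_upwards [hψtop.eventually (hnorm.eventually_gt_atTop 0)] with j hj
          simp only [hv, norm_smul, norm_inv, norm_norm]
          rw [inv_mul_cancel₀ hj.ne']
        exact tendsto_nhds_unique (h1.congr' h2) tendsto_const_nhds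
      -- ray properties
      have hrayf : ∀ (x : Fin (n+1) → ℝ) (t : ℝ), 0 ≤ t → f (x + t • d) ≤ f x := by
        refine ray_le hcP hfc u d hunorm hudir (μ + 1) fun j => ?_
        have h1 := hxslt (ψ j)
        have h2 : 1/((ψ j : ℝ)+1) ≤ 1 := by
          rw [div_le_one (by positivity)]
          have h3 : (0:ℝ) ≤ (ψ j : ℝ) := Nat.cast_nonneg _
          linarith
        exact le_of_lt (lt_of_lt_of_le h1 (by linarith))
      have hrayg : ∀ i, ∀ (x : Fin (n+1) → ℝ) (t : ℝ), 0 ≤ t →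
          MvPolynomial.eval (x + t • d) (G i) ≤ MvPolynomial.eval x (G i) :=
        fun i => ray_le (hcG i) (hgc i) u d hunorm hudir 0 fun j => hxsK (ψ j) i
      obtain ⟨β, hβnp, hβ⟩ := affine_along_d P hcP d hrayf
      choose b hbnp hblin using fun i => affine_along_d (G i) (hcG i) d (hrayg i)
      have hKray : ∀ x ∈ K, ∀ t : ℝ, 0 ≤ t → x + t • d ∈ K := by
        intro x hx t ht
        simp only [hK, Set.mem_setOf_eq] at hx ⊢
        intro i
        rw [hblin i x t]
        nlinarith [hbnp i, hx i]
      obtain ⟨x0, hx0⟩ := hne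
      have hcle : c ≤ f x0 := hc x0 hx0
      have hβ0 : β = 0 := by
        rcases eq_or_lt_of_le hβnp with h | h
        · exact h
        · exfalso
          set t0 := (c - f x0 - 1)/β with ht0
          have ht0pos : 0 ≤ t0 := le_of_lt (div_pos_of_neg_of_neg (by linarith) h)
          have hmem := hKray x0 hx0 t0 ht0pos
          have h2 := hc _ hmem
          rw [hβ x0 t0] at h2
          have h3 : β * t0 = c - f x0 - 1 := by
            rw [ht0, mul_comm, div_mul_cancel₀ _ (ne_of_lt h)]
          linarith
      -- choose a coordinate where d is nonzero
      have hdne : d ≠ 0 := fun h => by rw [h] at hd1; simp at hd1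
      obtain ⟨kc, hkc⟩ : ∃ kc, d kc ≠ 0 := by
        by_contra hcon
        push_neg at hcon
        exact hdne (funext hcon)
      set ι : (Fin n → ℝ) → (Fin (n+1) → ℝ) := fun y => Fin.insertNth kc (0:ℝ) y with hι
      set P' : MvPolynomial (Fin n) ℝ :=
        MvPolynomial.aeval (Fin.insertNth kc (0 : MvPolynomial (Fin n) ℝ)
          fun j => MvPolynomial.X j) P with hP'
      set G' : Fin m → MvPolynomial (Fin n) ℝ := fun i =>
        if b i = 0 then MvPolynomial.aeval (Fin.insertNth kc (0 : MvPolynomial (Fin n) ℝ)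
          fun j => MvPolynomial.X j) (G i) else 0 with hG'
      have hevalP' : ∀ y, MvPolynomial.eval y P' = f (ι y) := fun y => eval_subst kc P y
      have hevalG' : ∀ i y, b i = 0 →
          MvPolynomial.eval y (G' i) = MvPolynomial.eval (ι y) (G i) := by
        intro i y hb
        rw [hG']
        simp only [hb, if_true]
        exact eval_subst kc (G i) y
      have hevalG'0 : ∀ i y, b i ≠ 0 → MvPolynomial.eval y (G' i) = 0 := by
        intro i y hb
        rw [hG']
        simp [hb]
      -- convexity of the reduced data
      have hcP' : ConvexOn ℝ Set.univ fun y => MvPolynomial.eval y P' := by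
        refine ⟨convex_univ, ?_⟩
        intro y _ z _ aa bb ha hb' hab
        simp only [hevalP']
        rw [hι]
        show f (Fin.insertNth kc (0:ℝ) (aa • y + bb • z)) ≤ _
        rw [insertNth_comb kc aa bb y z]
        exact hcP.2 (Set.mem_univ _) (Set.mem_univ _) ha hb' hab
      have hcG' : ∀ i, ConvexOn ℝ Set.univ fun y => MvPolynomial.eval y (G' i) := by
        intro i
        rcases eq_or_ne (b i) 0 with hb | hb
        · refine ⟨convex_univ, ?_⟩
          intro y _ z _ aa bb ha hb' hab
          simp only [hevalG' i _ hb]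
          rw [hι]
          show MvPolynomial.eval (Fin.insertNth kc (0:ℝ) (aa • y + bb • z)) (G i) ≤ _
          rw [insertNth_comb kc aa bb y z]
          exact (hcG i).2 (Set.mem_univ _) (Set.mem_univ _) ha hb' hab
        · have hzero : (fun y : Fin n → ℝ => MvPolynomial.eval y (G' i)) = fun _ => (0:ℝ) := by
            funext y; exact hevalG'0 i y hb
          rw [hzero]
          exact convexOn_const 0 convex_univ
      -- the shift amount needed to reach K
      set T : (Fin n → ℝ) → ℝ := fun y =>
        ∑ i : Fin m, if b i = 0 then 0 else
          max 0 (MvPolynomial.eval (ι y) (G i) / (-(b i))) with hT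
      have hTnn : ∀ y, 0 ≤ T y := by
        intro y
        rw [hT]
        apply Finset.sum_nonneg
        intro i _
        split_ifs
        · exact le_rfl
        · exact le_max_left _ _
      have hTge : ∀ y i, b i ≠ 0 →
          MvPolynomial.eval (ι y) (G i) / (-(b i)) ≤ T y := by
        intro y i hbne
        have h1 : MvPolynomial.eval (ι y) (G i) / (-(b i))
            ≤ (if b i = 0 then (0:ℝ) else max 0 (MvPolynomial.eval (ι y) (G i) / (-(b i)))) := by
          simp only [hbne, if_false]
          exact le_max_right _ _
        refine le_trans h1 ?_
        rw [hT]
        refine Finset.single_le_sum (f := fun i => if b i = 0 then (0:ℝ) else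
          max 0 (MvPolynomial.eval (ι y) (G i) / (-(b i)))) (fun i2 _ => ?_) (Finset.mem_univ i)
        split_ifs
        · exact le_rfl
        · exact le_max_left _ _
      have hmemσ : ∀ y, (∀ i, MvPolynomial.eval y (G' i) ≤ 0) → ι y + T y • d ∈ K := by
        intro y hy
        simp only [hK, Set.mem_setOf_eq]
        intro i
        rw [hblin i (ι y) (T y)]
        rcases eq_or_ne (b i) 0 with hb | hb
        · rw [hb, zero_mul, add_zero]
          have h2 := hy i
          rw [hevalG' i y hb] at h2
          exact h2
        · have hblt : b i < 0 := lt_of_le_of_ne (hbnp i) hb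
          have h1 := hTge y i hb
          rw [div_le_iff₀ (by linarith : (0:ℝ) < -(b i))] at h1
          nlinarith
      -- decomposition of an arbitrary point
      have hdecomp : ∀ x : Fin (n+1) → ℝ,
          ι (Fin.removeNth kc (x - (x kc / d kc) • d)) = x - (x kc / d kc) • d := by
        intro x
        have h0 : (x - (x kc / d kc) • d) kc = 0 := by
          simp only [Pi.sub_apply, Pi.smul_apply, smul_eq_mul]
          field_simp
          ring
        conv_rhs => rw [← Fin.insertNth_self_removeNth kc (x - (x kc / d kc) • d), h0]
      have hmemρ : ∀ x ∈ K,
          (∀ i, MvPolynomial.eval (Fin.removeNth kc (x - (x kc / d kc) • d)) (G' i) ≤ 0)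
          ∧ MvPolynomial.eval (Fin.removeNth kc (x - (x kc / d kc) • d)) P' = f x := by
        intro x hx
        simp only [hK, Set.mem_setOf_eq] at hx
        have hiy := hdecomp x
        have hxerep : (x - (x kc / d kc) • d) + (x kc / d kc) • d = x := by abel
        constructor
        · intro i
          rcases eq_or_ne (b i) 0 with hb | hb
          · rw [hevalG' i _ hb, hiy]
            have h2 := hblin i (x - (x kc / d kc) • d) (x kc / d kc)
            rw [hxerep, hb, zero_mul] at h2
            have h3 := hx i
            linarith
          · rw [hevalG'0 i _ hb]
        · rw [hevalP', hiy]
          have h2 := hβ (x - (x kc / d kc) • d) (x kc / d kc)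
          rw [hxerep, hβ0, zero_mul, add_zero] at h2
          exact h2.symm
      -- nonemptiness and boundedness of the reduced problem
      have hA'ne : {y : Fin n → ℝ | ∀ i, MvPolynomial.eval y (G' i) ≤ 0}.Nonempty :=
        ⟨Fin.removeNth kc (x0 - (x0 kc / d kc) • d), (hmemρ x0 hx0).1⟩
      have hbdd' : ∀ y ∈ {y : Fin n → ℝ | ∀ i, MvPolynomial.eval y (G' i) ≤ 0},
          c ≤ MvPolynomial.eval y P' := by
        intro y hy
        rw [hevalP' y]
        show c ≤ MvPolynomial.eval (ι y) P
        have h2 := hβ (ι y) (T y)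
        rw [hβ0, zero_mul, add_zero] at h2
        rw [← h2]
        exact hc _ (hmemσ y hy)
      obtain ⟨yb, hybA, hybmin⟩ := ih m P' G' hcP' hcG' hA'ne ⟨c, hbdd'⟩
      have hxbK : ι yb + T yb • d ∈ K := hmemσ yb hybA
      refine ⟨ι yb + T yb • d, hxbK, fun x hx => ?_⟩
      have h1 : f (ι yb + T yb • d) = MvPolynomial.eval yb P' := by
        rw [hevalP' yb]
        have h2 := hβ (ι yb) (T yb)
        rw [hβ0, zero_mul, add_zero] at h2
        exact h2
      obtain ⟨hyA', hyval⟩ := hmemρ x hx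
      calc f (ι yb + T yb • d) = MvPolynomial.eval yb P' := h1
        _ ≤ MvPolynomial.eval (Fin.removeNth kc (x - (x kc / d kc) • d)) P' := hybmin _ hyA'
        _ = f x := hyval
    · -- Case A : a bounded subsequence exists
      push_neg at hbnd
      obtain ⟨C, hCinf⟩ := hbnd
      have hfreq : ∃ᶠ k in atTop, ‖xs k‖ ≤ C := by
        rw [← Nat.cofinite_eq_atTop]
        exact Filter.frequently_cofinite_iff_infinite.mpr hCinf
      obtain ⟨φ, hφmono, hφle⟩ := Filter.extraction_of_frequently_atTop hfreq
      have hball : ∀ j, xs (φ j) ∈ Metric.closedBall (0 : Fin (n+1) → ℝ) C := by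
        intro j
        simpa [Metric.mem_closedBall, dist_zero_right] using hφle j
      obtain ⟨xb, -, ψ, hψmono, hψ⟩ :=
        tendsto_subseq_of_bounded Metric.isBounded_closedBall hball
      have hxbK : xb ∈ K :=
        hKclosed.mem_of_tendsto hψ (Eventually.of_forall fun j => hxsK _)
      refine ⟨xb, hxbK, fun x hx => ?_⟩
      have h1 : Tendsto (fun j => f (xs (φ (ψ j)))) atTop (nhds (f xb)) :=
        (hfc.tendsto xb).comp hψ
      have h2 : ∀ j : ℕ, f (xs (φ (ψ j))) ≤ μ + 1/((j:ℝ)+1) := by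
        intro j
        have hle : j ≤ φ (ψ j) := le_trans hψmono.le_apply hφmono.le_apply
        have hle' : ((j:ℝ)+1) ≤ ((φ (ψ j) : ℝ)+1) := by
          have : (j:ℝ) ≤ (φ (ψ j) : ℝ) := by exact_mod_cast hle
          linarith
        have hc2 : 1/((φ (ψ j):ℝ)+1) ≤ 1/((j:ℝ)+1) :=
          one_div_le_one_div_of_le (by positivity) hle'
        exact le_trans (hxslt _).le (by linarith)
      have h3 : Tendsto (fun j : ℕ => μ + 1/((j:ℝ)+1)) atTop (nhds (μ + 0)) :=
        tendsto_const_nhds.add tendsto_one_div_add_atTop_nhds_zero_nat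
      have hfxb : f xb ≤ μ := by
        have h4 := le_of_tendsto_of_tendsto h1 h3 (Eventually.of_forall h2)
        simpa using h4
      exact le_trans hfxb (hμle x hx)

theorem stmt_3 {n m : ℕ} (P : MvPolynomial (Fin n) ℝ)
    (G : Fin m → MvPolynomial (Fin n) ℝ)
    (f₀ : (Fin n → ℝ) → ℝ) (hf₀ : f₀ = fun x => MvPolynomial.eval x P)
    (g : Fin m → (Fin n → ℝ) → ℝ) (hg : ∀ i, g i = fun x => MvPolynomial.eval x (G i))
    (hconvf : ConvexOn ℝ Set.univ f₀) (hconvg : ∀ i, ConvexOn ℝ Set.univ (g i))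
    (K : Set (Fin n → ℝ)) (hK : K = {x | ∀ i, g i x ≤ 0}) (hKne : K.Nonempty)
    (hbdd : ∃ c : ℝ, ∀ x ∈ K, c ≤ f₀ x) :
    ∃ xb ∈ K, ∀ x ∈ K, f₀ xb ≤ f₀ x := by
  have hKeq : K = {x : Fin n → ℝ | ∀ i, MvPolynomial.eval x (G i) ≤ 0} := by
    rw [hK]
    ext x
    simp only [Set.mem_setOf_eq]
    constructor
    · intro h i; have := h i; rwa [hg i] at this
    · intro h i; rw [hg i]; exact h i
  have hcf : ConvexOn ℝ Set.univ (fun x => MvPolynomial.eval x P) := hf₀ ▸ hconvf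
  have hcg : ∀ i, ConvexOn ℝ Set.univ (fun x => MvPolynomial.eval x (G i)) :=
    fun i => (hg i) ▸ hconvg i
  have hne : {x : Fin n → ℝ | ∀ i, MvPolynomial.eval x (G i) ≤ 0}.Nonempty := hKeq ▸ hKne
  have hbdd' : ∃ c : ℝ, ∀ x ∈ {x : Fin n → ℝ | ∀ i, MvPolynomial.eval x (G i) ≤ 0},
      c ≤ MvPolynomial.eval x P := by
    obtain ⟨c, hc⟩ := hbdd
    exact ⟨c, fun x hx => by
      have := hc x (hKeq ▸ hx)
      rwa [hf₀] at this⟩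
  obtain ⟨xb, hxb, hmin⟩ := main_aux n m P G hcf hcg hne hbdd'
  refine ⟨xb, hKeq ▸ hxb, fun x hx => ?_⟩
  rw [hf₀]
  exact hmin x (hKeq ▸ hx)
end

section
/- Let f_j and g_i be convex polynomials defining the multi-objective problem Min_{ℝ^p_+} f(x) subject to g_i(x) ≤ 0 (i = 1,…,m) with nonempty feasible set K. Then the problem admits an efficient solution if and only if there exists z₀ ∈ ℝ^n such that the set f(K) ∩ (f(z₀) − ℝ^p_+) is nonempty and bounded. -/
open MvPolynomial Set Filter Bornology Topology

namespace FWproof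

variable {n : ℕ}

noncomputable def lineP (P : MvPolynomial (Fin n) ℝ) (a b : Fin n → ℝ) : Polynomial ℝ :=
  MvPolynomial.aeval (fun i => Polynomial.C (a i) + Polynomial.C (b i) * Polynomial.X) P

lemma lineP_eval (P : MvPolynomial (Fin n) ℝ) (a b : Fin n → ℝ) (t : ℝ) :
    (lineP P a b).eval t = MvPolynomial.eval (a + t • b) P := by
  have h := MvPolynomial.comp_aeval
    (f := fun i => Polynomial.C (a i) + Polynomial.C (b i) * Polynomial.X)
    (Polynomial.aeval t (R := ℝ))
  have h2 := congrFun (congrArg (fun (φ : MvPolynomial (Fin n) ℝ →ₐ[ℝ] ℝ) => (φ : MvPolynomial (Fin n) ℝ → ℝ)) h) P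
  simp only [AlgHom.coe_comp, Function.comp_apply] at h2
  have : Polynomial.aeval t (lineP P a b) = (lineP P a b).eval t := by
    rw [← Polynomial.coe_aeval_eq_eval]
  rw [← this, lineP]
  rw [h2]
  have : (fun i => (Polynomial.aeval t) (Polynomial.C (a i) + Polynomial.C (b i) * Polynomial.X))
      = fun i => (a + t • b) i := by
    funext i
    simp only [map_add, map_mul, Polynomial.aeval_C, Polynomial.aeval_X, Pi.add_apply,
      Pi.smul_apply, smul_eq_mul, Algebra.algebraMap_self, RingHom.id_apply]
    ring
  rw [this]
  rw [show (MvPolynomial.eval (a + t • b)) = RingHomClass.toRingHom (MvPolynomial.aeval (R := ℝ) (a + t • b)) from (MvPolynomial.coe_aeval_eq_eval _).symm]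
  rfl

end FWproof

namespace FWproof

variable {E : Type*} [NormedAddCommGroup E] [NormedSpace ℝ E]

lemma convexOn_comp_line {f : E → ℝ} (hf : ConvexOn ℝ Set.univ f) (x d : E) :
    ConvexOn ℝ Set.univ fun t : ℝ => f (x + t • d) := by
  refine ⟨convex_univ, fun s _ t _ a b ha hb hab => ?_⟩
  have hx : a • x + b • x = x := by rw [← add_smul, hab, one_smul]
  have key : x + (a * s + b * t) • d = a • (x + s • d) + b • (x + t • d) := by
    have : a • (x + s • d) + b • (x + t • d)
        = (a • x + b • x) + ((a*s) • d + (b*t) • d) := by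
      rw [smul_add, smul_add, mul_smul, mul_smul]; abel
    rw [this, hx, ← add_smul]
  simp only [smul_eq_mul]
  rw [key]
  exact hf.2 (mem_univ _) (mem_univ _) ha hb hab

/-- Lemma A: if a convex function is bounded above on one ray in direction `d`,
then it is nonincreasing along `d` from every basepoint. -/
lemma ray_mono {f : E → ℝ} (hf : ConvexOn ℝ Set.univ f) {x₀ d : E} {C : ℝ}
    (hray : ∀ t : ℝ, 0 ≤ t → f (x₀ + t • d) ≤ C) :
    ∀ (x : E) (s t : ℝ), s ≤ t → f (x + t • d) ≤ f (x + s • d) := by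
  -- Step 1: tail bound for every basepoint
  have tail : ∀ (x : E) (β : ℝ), 0 ≤ β → f (x + β • d) ≤ (f ((2:ℝ) • x - x₀) + C) / 2 := by
    intro x β hβ
    have hmid : x + β • d = (1/2 : ℝ) • ((2:ℝ) • x - x₀) + (1/2 : ℝ) • (x₀ + (2*β) • d) := by
      module
    rw [hmid]
    have h2 := hf.2 (mem_univ ((2:ℝ) • x - x₀)) (mem_univ (x₀ + (2*β) • d))
      (by norm_num : (0:ℝ) ≤ 1/2) (by norm_num : (0:ℝ) ≤ 1/2) (by norm_num)
    refine h2.trans ?_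
    have := hray (2*β) (by linarith)
    simp only [smul_eq_mul]
    linarith
  intro x s t hst
  rcases eq_or_lt_of_le hst with rfl | hst
  · exact le_refl _
  by_contra hcon
  push_neg at hcon
  -- q is the restriction to the line, convex, with q s < q t
  set q : ℝ → ℝ := fun t => f (x + t • d) with hq
  have hqc : ConvexOn ℝ Set.univ q := convexOn_comp_line hf x d
  have hCx : ∀ β : ℝ, 0 ≤ β → q β ≤ (f ((2:ℝ) • x - x₀) + C) / 2 := fun β hβ => tail x β hβ
  set Cx := (f ((2:ℝ) • x - x₀) + C) / 2 with hCxdef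
  set δ := (q t - q s) / (t - s) with hδ
  have hδpos : 0 < δ := div_pos (by linarith) (by linarith)
  -- pick u large
  set u := max (t + (Cx - q t + 1)/δ) (max (t+1) 0) with hu
  have hut : t < u := lt_of_lt_of_le (by linarith) (le_trans (le_max_left _ _) (le_max_right _ _))
  have hu0 : 0 ≤ u := le_trans (le_max_right _ _) (le_max_right _ _)
  have hslope := hqc.slope_mono_adjacent (mem_univ s) (mem_univ u) hst hut
  rw [← hδ] at hslope
  have hut' : (0:ℝ) < u - t := by linarith
  have hδle : δ * (u - t) ≤ q u - q t := (le_div_iff₀ hut').mp hslope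
  have husize : t + (Cx - q t + 1)/δ ≤ u := le_max_left _ _
  have hbig : Cx - q t + 1 ≤ δ * (u - t) := by
    have h1 : (Cx - q t + 1)/δ ≤ u - t := by linarith
    calc Cx - q t + 1 = δ * ((Cx - q t + 1)/δ) := by field_simp
    _ ≤ δ * (u - t) := by nlinarith
  have h3 : q u ≤ Cx := hCx u hu0
  linarith

end FWproof

namespace FWproof

variable {n : ℕ}

/-- Lemma E: a polynomial which is nonincreasing and nonconstant along a ray
eventually goes below any bound. -/
lemma poly_ray_small {P : MvPolynomial (Fin n) ℝ} {a b : Fin n → ℝ}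
    (hmono : ∀ s t : ℝ, s ≤ t → MvPolynomial.eval (a + t • b) P ≤ MvPolynomial.eval (a + s • b) P)
    (hnc : ∃ t : ℝ, MvPolynomial.eval (a + t • b) P ≠ MvPolynomial.eval a P) :
    ∀ M : ℝ, ∃ T : ℝ, 0 ≤ T ∧ ∀ t ≥ T, MvPolynomial.eval (a + t • b) P ≤ M := by
  intro M
  set q := lineP P a b with hqdef
  have hq : ∀ t : ℝ, q.eval t = MvPolynomial.eval (a + t • b) P := lineP_eval P a b
  have ha0 : MvPolynomial.eval (a + (0:ℝ) • b) P = MvPolynomial.eval a P := by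
    simp
  have hdeg : 0 < q.degree := by
    by_contra hd
    push_neg at hd
    obtain ⟨t₁, ht₁⟩ := hnc
    have := Polynomial.eq_C_of_degree_le_zero hd
    apply ht₁
    rw [← hq t₁, ← ha0, ← hq 0, this]
    simp
  have htt := Polynomial.abs_tendsto_atTop q hdeg
  have hev : ∀ᶠ t in atTop, max |M| |q.eval 0| < |q.eval t| :=
    htt.eventually_gt_atTop _
  obtain ⟨T₀, hT₀⟩ := eventually_atTop.mp hev
  refine ⟨max T₀ 0, le_max_right _ _, fun t ht => ?_⟩
  have ht0 : (0:ℝ) ≤ t := le_trans (le_max_right _ _) ht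
  have h1 : q.eval t ≤ q.eval 0 := by
    rw [hq, hq]
    exact (by simpa using hmono 0 t ht0)
  have h2 := hT₀ t (le_trans (le_max_left _ _) ht)
  have hneg : q.eval t < 0 := by
    by_contra hge
    push_neg at hge
    rw [abs_of_nonneg hge] at h2
    have : |q.eval 0| < q.eval 0 := lt_of_le_of_lt (le_max_right _ _) (lt_of_lt_of_le h2 h1)
    exact absurd this (not_lt.mpr (le_abs_self _))
  rw [← hq]
  have : |M| < -q.eval t := by
    rw [abs_of_neg hneg] at h2
    exact lt_of_le_of_lt (le_max_left _ _) h2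
  linarith [neg_abs_le M]

/-- Lemma C: if a convex polynomial is bounded above on some ray in direction `d`
and is not globally invariant along `d`, then at any point where it *is* invariant
along `d` its value is `≤ 0`. -/
lemma inv_nonpos {P : MvPolynomial (Fin n) ℝ}
    (hconv : ConvexOn ℝ Set.univ fun x => MvPolynomial.eval x P)
    {x₀ d : Fin n → ℝ} {C : ℝ}
    (hray : ∀ t : ℝ, 0 ≤ t → MvPolynomial.eval (x₀ + t • d) P ≤ C)
    (hninv : ∃ (x : Fin n → ℝ) (t : ℝ), MvPolynomial.eval (x + t • d) P ≠ MvPolynomial.eval x P)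
    {z : Fin n → ℝ} (hz : ∀ t : ℝ, MvPolynomial.eval (z + t • d) P = MvPolynomial.eval z P) :
    MvPolynomial.eval z P ≤ 0 := by
  have mono := ray_mono hconv hray
  by_contra hpos
  push_neg at hpos
  obtain ⟨xs, ts, hxt⟩ := hninv
  have hne : xs ≠ z := by
    rintro rfl
    exact hxt (hz ts)
  set e := xs - z with he
  set u := lineP P (z + ts • d) e - lineP P z e with hu
  have hueval : ∀ s : ℝ, u.eval s
      = MvPolynomial.eval ((z + s • e) + ts • d) P - MvPolynomial.eval (z + s • e) P := by
    intro s
    simp only [hu, Polynomial.eval_sub, lineP_eval]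
    congr 2
    abel
  have hu1 : u.eval 1 ≠ 0 := by
    rw [hueval]
    have hz1 : z + (1:ℝ) • e = xs := by
      rw [one_smul, he]; abel
    rw [hz1]
    exact sub_ne_zero_of_ne hxt
  have hune : u ≠ 0 := by
    intro h0
    rw [h0] at hu1
    simp at hu1
  -- pick ε > 0 with u(ε) ≠ 0 and u(-ε) ≠ 0
  have hfin : ({s : ℝ | u.IsRoot s} ∪ {s : ℝ | u.IsRoot (-s)}).Finite := by
    refine Set.Finite.union (u.finite_setOf_isRoot hune) ?_
    have : {s : ℝ | u.IsRoot (-s)} = Neg.neg ⁻¹' {s : ℝ | u.IsRoot s} := rfl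
    rw [this]
    exact Set.Finite.preimage neg_injective.injOn (u.finite_setOf_isRoot hune)
  obtain ⟨ε, hεI, hεB⟩ := ((Set.Ioi_infinite (0:ℝ)).diff hfin).nonempty
  rw [Set.mem_Ioi] at hεI
  have hεp : u.eval ε ≠ 0 := fun h => hεB (Or.inl h)
  have hεm : u.eval (-ε) ≠ 0 := fun h => hεB (Or.inr h)
  -- both perturbed points are non-invariant, so P goes to -∞ along their rays
  have key : ∀ s : ℝ, u.eval s ≠ 0 →
      ∃ T : ℝ, 0 ≤ T ∧ ∀ t ≥ T, MvPolynomial.eval ((z + s • e) + t • d) P ≤ 0 := by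
    intro s hs
    refine poly_ray_small (fun s' t' h => mono _ s' t' h) ⟨ts, ?_⟩ 0
    rw [hueval] at hs
    exact sub_ne_zero.mp hs
  obtain ⟨T₁, hT₁0, hT₁⟩ := key ε hεp
  obtain ⟨T₂, hT₂0, hT₂⟩ := key (-ε) hεm
  set T := max T₁ T₂ with hT
  have h1 := hT₁ T (le_max_left _ _)
  have h2 := hT₂ T (le_max_right _ _)
  have hmid : z + T • d = (1/2 : ℝ) • ((z + ε • e) + T • d) + (1/2 : ℝ) • ((z + (-ε) • e) + T • d) := by
    module
  have hcv := hconv.2 (mem_univ ((z + ε • e) + T • d)) (mem_univ ((z + (-ε) • e) + T • d))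
    (by norm_num : (0:ℝ) ≤ 1/2) (by norm_num : (0:ℝ) ≤ 1/2) (by norm_num)
  rw [← hmid] at hcv
  simp only [smul_eq_mul] at hcv
  have : MvPolynomial.eval (z + T • d) P ≤ 0 := by
    calc MvPolynomial.eval (z + T • d) P
        ≤ 1/2 * MvPolynomial.eval ((z + ε • e) + T • d) P
          + 1/2 * MvPolynomial.eval ((z + (-ε) • e) + T • d) P := hcv
      _ ≤ 0 := by linarith
  rw [hz T] at this
  linarith

/-- Lemma D: an unbounded closed convex set has a recession direction at any of its points. -/
lemma exists_recession {S : Set (Fin n → ℝ)} (hcl : IsClosed S) (hcv : Convex ℝ S)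
    {x₀ : Fin n → ℝ} (hx₀ : x₀ ∈ S) (hub : ¬Bornology.IsBounded S) :
    ∃ d : Fin n → ℝ, d ≠ 0 ∧ ∀ t : ℝ, 0 ≤ t → x₀ + t • d ∈ S := by
  have h : ∀ k : ℕ, ∃ x, x ∈ S ∧ (k:ℝ) < ‖x - x₀‖ := by
    intro k
    by_contra hcon
    push_neg at hcon
    apply hub
    refine (Metric.isBounded_closedBall (x := x₀) (r := k)).subset ?_
    intro y hy
    rw [Metric.mem_closedBall, dist_eq_norm]
    exact hcon y hy
  choose x hxS hxn using h
  have hxne : ∀ k, ‖x k - x₀‖ ≠ 0 := by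
    intro k
    exact ne_of_gt (lt_of_le_of_lt (Nat.cast_nonneg k) (hxn k))
  set uu : ℕ → (Fin n → ℝ) := fun k => ‖x k - x₀‖⁻¹ • (x k - x₀) with huu
  have hmem : ∀ k, uu k ∈ Metric.sphere (0 : Fin n → ℝ) 1 := by
    intro k
    rw [Metric.mem_sphere, dist_zero_right, huu]
    rw [norm_smul, norm_inv, norm_norm]
    exact inv_mul_cancel₀ (hxne k)
  obtain ⟨d, hdcl, ψ, hψ, hlim⟩ :=
    tendsto_subseq_of_bounded Metric.isBounded_sphere hmem
  rw [Metric.isClosed_sphere.closure_eq, Metric.mem_sphere, dist_zero_right] at hdcl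
  refine ⟨d, fun h0 => by simp [h0] at hdcl, fun t ht => ?_⟩
  have hfe : ∀ᶠ j in atTop, x₀ + t • uu (ψ j) ∈ S := by
    obtain ⟨N, hN⟩ := exists_nat_ge t
    rw [eventually_atTop]
    refine ⟨N, fun j hj => ?_⟩
    have hjt : t ≤ ‖x (ψ j) - x₀‖ := by
      have h1 : (N:ℝ) ≤ (ψ j : ℝ) := by exact_mod_cast Nat.cast_le.mpr (le_trans hj (hψ.le_apply))
      have h2 := hxn (ψ j)
      linarith
    set lam := t / ‖x (ψ j) - x₀‖ with hlam
    have hnorm_pos : (0:ℝ) < ‖x (ψ j) - x₀‖ := lt_of_le_of_ne (norm_nonneg _) (Ne.symm (hxne (ψ j)))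
    have hlam0 : 0 ≤ lam := div_nonneg ht (le_of_lt hnorm_pos)
    have hlam1 : lam ≤ 1 := (div_le_one hnorm_pos).mpr hjt
    have hc := hcv hx₀ (hxS (ψ j)) (by linarith : (0:ℝ) ≤ 1 - lam) hlam0 (by ring)
    have heq : (1 - lam) • x₀ + lam • x (ψ j) = x₀ + t • uu (ψ j) := by
      rw [huu]
      have : t • ‖x (ψ j) - x₀‖⁻¹ • (x (ψ j) - x₀) = lam • (x (ψ j) - x₀) := by
        rw [smul_smul, hlam, div_eq_mul_inv]
      rw [this, smul_sub, sub_smul, one_smul]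
      abel
    rw [← heq]
    exact hc
  have hten : Tendsto (fun j => x₀ + t • uu (ψ j)) atTop (𝓝 (x₀ + t • d)) := by
    exact Tendsto.const_add x₀ (hlim.const_smul t)
  exact hcl.mem_of_tendsto hten hfe

lemma convex_sub {P : MvPolynomial (Fin n) ℝ}
    (hconv : ConvexOn ℝ Set.univ fun x => MvPolynomial.eval x P) (c : ℝ) :
    Convex ℝ {x : Fin n → ℝ | MvPolynomial.eval x P ≤ c} := by
  have := hconv.convex_le c
  convert this using 1
  ext x; simp

lemma closed_sub (P : MvPolynomial (Fin n) ℝ) (c : ℝ) :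
    IsClosed {x : Fin n → ℝ | MvPolynomial.eval x P ≤ c} :=
  isClosed_le (MvPolynomial.continuous_eval P) continuous_const

lemma closed_feas {ι : Type} [Fintype ι] (h : ι → MvPolynomial (Fin n) ℝ)
    (V : Submodule ℝ (Fin n → ℝ)) (xh : Fin n → ℝ) :
    IsClosed {x : Fin n → ℝ | (∀ i, MvPolynomial.eval x (h i) ≤ 0) ∧ x - xh ∈ V} := by
  have h1 : {x : Fin n → ℝ | (∀ i, MvPolynomial.eval x (h i) ≤ 0) ∧ x - xh ∈ V}
      = (⋂ i, {x | MvPolynomial.eval x (h i) ≤ 0}) ∩ ((fun x => x - xh) ⁻¹' (V : Set (Fin n → ℝ))) := by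
    ext x; simp [Set.mem_iInter]
  rw [h1]
  refine IsClosed.inter (isClosed_iInter fun i => closed_sub (h i) 0) ?_
  exact IsClosed.preimage (by continuity) V.closed_of_finiteDimensional

lemma convex_feas {ι : Type} [Fintype ι] {h : ι → MvPolynomial (Fin n) ℝ}
    (hconv : ∀ i, ConvexOn ℝ Set.univ fun x => MvPolynomial.eval x (h i))
    (V : Submodule ℝ (Fin n → ℝ)) (xh : Fin n → ℝ) :
    Convex ℝ {x : Fin n → ℝ | (∀ i, MvPolynomial.eval x (h i) ≤ 0) ∧ x - xh ∈ V} := by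
  intro x hx y hy a b ha hb hab
  refine ⟨fun i => convex_sub (hconv i) 0 (hx.1 i) (hy.1 i) ha hb hab, ?_⟩
  have key : a • x + b • y - xh = a • (x - xh) + b • (y - xh) := by
    have h2 : a • (x - xh) + b • (y - xh) = a • x + b • y - (a + b) • xh := by
      rw [smul_sub, smul_sub, add_smul]; abel
    rw [h2, hab, one_smul]
  rw [key]
  exact V.add_mem (V.smul_mem a hx.2) (V.smul_mem b hy.2)

theorem FWaux :
    ∀ (N : ℕ) (ι : Type) (_hι : Fintype ι) (V : Submodule ℝ (Fin n → ℝ))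
      (_hN : Module.finrank ℝ V + Fintype.card ι ≤ N)
      (h : ι → MvPolynomial (Fin n) ℝ)
      (_hconv : ∀ i, ConvexOn ℝ Set.univ fun x => MvPolynomial.eval x (h i))
      (φ : MvPolynomial (Fin n) ℝ)
      (_hφ : ConvexOn ℝ Set.univ fun x => MvPolynomial.eval x φ)
      (xh : Fin n → ℝ)
      (B : Set (Fin n → ℝ))
      (_hB : B = {x | (∀ i, MvPolynomial.eval x (h i) ≤ 0) ∧ x - xh ∈ V})
      (_hne : B.Nonempty) (_hbdd : BddBelow ((fun x => MvPolynomial.eval x φ) '' B)),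
      ∃ xbar ∈ B, ∀ y ∈ B, MvPolynomial.eval xbar φ ≤ MvPolynomial.eval y φ := by
  intro N
  induction N using Nat.strong_induction_on with
  | _ N IH =>
  intro ι hι V hN h hconv φ hφ xh B hB hne hbdd
  classical
  have hBclosed : IsClosed B := by rw [hB]; exact closed_feas h V xh
  have hBconvex : Convex ℝ B := by rw [hB]; exact convex_feas hconv V xh
  set μ := sInf ((fun x => MvPolynomial.eval x φ) '' B) with hμ
  have hμle : ∀ y ∈ B, μ ≤ MvPolynomial.eval y φ := fun y hy => csInf_le hbdd ⟨y, hy, rfl⟩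
  obtain ⟨w, ⟨x₁, hx₁B, rfl⟩, hx₁lt⟩ :=
    exists_lt_of_csInf_lt (hne.image _) (show μ < μ + 1 by linarith)
  set S₁ := B ∩ {x | MvPolynomial.eval x φ ≤ μ + 1} with hS₁
  have hS₁closed : IsClosed S₁ := hBclosed.inter (closed_sub φ (μ+1))
  have hS₁convex : Convex ℝ S₁ := hBconvex.inter (convex_sub hφ (μ+1))
  have hx₁S₁ : x₁ ∈ S₁ := ⟨hx₁B, le_of_lt hx₁lt⟩
  by_cases hSb : Bornology.IsBounded S₁
  · -- compact case
    have hcomp : IsCompact S₁ := Metric.isCompact_of_isClosed_isBounded hS₁closed hSb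
    obtain ⟨xbar, hxbarS, hmin⟩ := hcomp.exists_isMinOn ⟨x₁, hx₁S₁⟩
      ((MvPolynomial.continuous_eval φ).continuousOn)
    refine ⟨xbar, hxbarS.1, fun y hy => ?_⟩
    rcases le_or_gt (MvPolynomial.eval y φ) (μ + 1) with hle | hgt
    · exact hmin ⟨hy, hle⟩
    · exact le_trans (hmin hx₁S₁) (le_trans (le_of_lt hx₁lt) (le_of_lt hgt))
  · -- unbounded case: recession direction
    obtain ⟨d, hd0, hray⟩ := exists_recession hS₁closed hS₁convex hx₁S₁ hSb
    have hdV : d ∈ V := by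
      have h1 : x₁ + (1:ℝ) • d ∈ S₁ := hray 1 (by norm_num)
      have h2 : (x₁ + (1:ℝ) • d) - xh ∈ V := by
        have := h1.1; rw [hB] at this; exact this.2
      have h3 : x₁ - xh ∈ V := by
        have := hx₁B; rw [hB] at this; exact this.2
      have : ((x₁ + (1:ℝ) • d) - xh) - (x₁ - xh) = d := by rw [one_smul]; abel
      rw [← this]
      exact V.sub_mem h2 h3
    have hrayφ : ∀ t : ℝ, 0 ≤ t → MvPolynomial.eval (x₁ + t • d) φ ≤ μ + 1 :=
      fun t ht => (hray t ht).2
    have hrayi : ∀ i, ∀ t : ℝ, 0 ≤ t → MvPolynomial.eval (x₁ + t • d) (h i) ≤ 0 := by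
      intro i t ht
      have := (hray t ht).1; rw [hB] at this; exact this.1 i
    have monoφ := ray_mono hφ hrayφ
    have monoi : ∀ i, ∀ (x : Fin n → ℝ) (s t : ℝ), s ≤ t →
        MvPolynomial.eval (x + t • d) (h i) ≤ MvPolynomial.eval (x + s • d) (h i) :=
      fun i => ray_mono (hconv i) (hrayi i)
    -- φ is invariant along d
    have hφinv : ∀ (x : Fin n → ℝ) (t : ℝ),
        MvPolynomial.eval (x + t • d) φ = MvPolynomial.eval x φ := by
      by_contra hni
      push_neg at hni
      obtain ⟨xw, tw, hw⟩ := hni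
      by_cases hzx : ∀ t : ℝ, MvPolynomial.eval (x₁ + t • d) φ = MvPolynomial.eval x₁ φ
      · -- invariance at x₁ for shifted polynomial φ' := φ - C (μ - 1) gives contradiction
        set φ' := φ - MvPolynomial.C (μ - 1) with hφ'
        have hev : ∀ x : Fin n → ℝ, MvPolynomial.eval x φ' = MvPolynomial.eval x φ - (μ - 1) := by
          intro x; rw [hφ']; simp
        have hφ'conv : ConvexOn ℝ Set.univ fun x => MvPolynomial.eval x φ' := by
          have : (fun x : Fin n → ℝ => MvPolynomial.eval x φ')
              = fun x => MvPolynomial.eval x φ + (-(μ - 1)) := by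
            funext x; rw [hev]; ring
          rw [this]
          exact hφ.add (convexOn_const _ convex_univ)
        have hray' : ∀ t : ℝ, 0 ≤ t → MvPolynomial.eval (x₁ + t • d) φ' ≤ 2 := by
          intro t ht; rw [hev]; have := hrayφ t ht; linarith
        have hninv' : ∃ (x : Fin n → ℝ) (t : ℝ),
            MvPolynomial.eval (x + t • d) φ' ≠ MvPolynomial.eval x φ' := by
          refine ⟨xw, tw, ?_⟩
          rw [hev, hev]
          intro hcon; apply hw; linarith
        have hz' : ∀ t : ℝ, MvPolynomial.eval (x₁ + t • d) φ' = MvPolynomial.eval x₁ φ' := by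
          intro t; rw [hev, hev, hzx t]
        have := inv_nonpos hφ'conv hray' hninv' hz'
        rw [hev] at this
        have := hμle x₁ hx₁B
        linarith
      · push_neg at hzx
        obtain ⟨t₂, ht₂⟩ := hzx
        obtain ⟨T, hT0, hT⟩ := poly_ray_small (fun s t hst => monoφ x₁ s t hst) ⟨t₂, ht₂⟩ (μ - 1)
        have hmem : x₁ + T • d ∈ S₁ := hray T hT0
        have := hμle _ hmem.1
        have := hT T (le_refl T)
        linarith
    by_cases hinv : ∀ i, ∀ (x : Fin n → ℝ) (t : ℝ),
        MvPolynomial.eval (x + t • d) (h i) = MvPolynomial.eval x (h i)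
    · -- case (b): everything invariant, reduce dimension
      set ℓ : (Fin n → ℝ) →ₗ[ℝ] ℝ :=
        ∑ i : Fin n, d i • (LinearMap.proj i : (Fin n → ℝ) →ₗ[ℝ] ℝ) with hℓ
      have hℓapp : ∀ v : Fin n → ℝ, ℓ v = ∑ i : Fin n, d i * v i := by
        intro v
        rw [hℓ]
        simp [LinearMap.sum_apply]
      have hℓd : 0 < ℓ d := by
        rw [hℓapp]
        obtain ⟨i₀, hi₀⟩ : ∃ i, d i ≠ 0 := by
          by_contra hcon; push_neg at hcon
          exact hd0 (funext hcon)
        refine Finset.sum_pos' (fun i _ => mul_self_nonneg (d i)) ⟨i₀, Finset.mem_univ _, ?_⟩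
        exact mul_self_pos.mpr hi₀
      set V' := V ⊓ LinearMap.ker ℓ with hV'
      have hV'le : V' ≤ V := inf_le_left
      have hdnot : d ∉ V' := by
        intro hd
        rw [hV', Submodule.mem_inf] at hd
        have := LinearMap.mem_ker.mp hd.2
        linarith
      have hlt : V' < V := lt_of_le_of_ne hV'le (fun heq => hdnot (heq ▸ hdV))
      have hrank : Module.finrank ℝ V' < Module.finrank ℝ V :=
        Submodule.finrank_lt_finrank_of_lt hlt
      set π : (Fin n → ℝ) → (Fin n → ℝ) := fun x => x + (-(ℓ (x - xh) / ℓ d)) • d with hπdef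
      set B' := {x : Fin n → ℝ | (∀ i, MvPolynomial.eval x (h i) ≤ 0) ∧ x - xh ∈ V'} with hB'
      have hπmem : ∀ x ∈ B, π x ∈ B' := by
        intro x hx
        rw [hB] at hx
        refine ⟨fun i => ?_, ?_⟩
        · rw [hπdef]; rw [hinv i x (-(ℓ (x - xh) / ℓ d))]; exact hx.1 i
        · have hVmem : π x - xh ∈ V := by
            rw [hπdef]
            have : x + (-(ℓ (x - xh) / ℓ d)) • d - xh = (x - xh) + (-(ℓ (x - xh) / ℓ d)) • d := by
              abel
            rw [this]
            exact V.add_mem hx.2 (V.smul_mem _ hdV)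
          have hker : π x - xh ∈ LinearMap.ker ℓ := by
            rw [LinearMap.mem_ker, hπdef]
            have : x + (-(ℓ (x - xh) / ℓ d)) • d - xh = (x - xh) + (-(ℓ (x - xh) / ℓ d)) • d := by
              abel
            rw [this, map_add, map_smul, smul_eq_mul]
            field_simp
            ring
          exact ⟨hVmem, hker⟩
      have hπφ : ∀ x : Fin n → ℝ, MvPolynomial.eval (π x) φ = MvPolynomial.eval x φ := by
        intro x; rw [hπdef]; exact hφinv x _
      have hB'subB : B' ⊆ B := by
        intro x hx
        rw [hB]
        exact ⟨hx.1, hV'le hx.2⟩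
      have hrec := IH (Module.finrank ℝ V' + Fintype.card ι)
        (lt_of_lt_of_le (Nat.add_lt_add_right hrank _) hN) ι hι V' (le_refl _) h hconv φ hφ xh
        B' hB' ⟨π x₁, hπmem x₁ hx₁B⟩
        (hbdd.mono (Set.image_mono hB'subB))
      obtain ⟨xbar, hxbarB', hmin⟩ := hrec
      refine ⟨xbar, hB'subB hxbarB', fun y hy => ?_⟩
      calc MvPolynomial.eval xbar φ ≤ MvPolynomial.eval (π y) φ := hmin _ (hπmem y hy)
        _ = MvPolynomial.eval y φ := hπφ y
    · -- case (a): some constraint is non-invariant; drop it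
      push_neg at hinv
      obtain ⟨i₀, hi₀⟩ := hinv
      set ι' := {i : ι // i ≠ i₀} with hι'
      have hcard : Fintype.card ι' + 1 = Fintype.card ι := by
        have h1 : Fintype.card {i : ι // i = i₀} = 1 := Fintype.card_subtype_eq i₀
        have h2 := Fintype.card_subtype_compl (fun i : ι => i = i₀)
        have h3 : 1 ≤ Fintype.card ι := Fintype.card_pos_iff.mpr ⟨i₀⟩
        have h4 : Fintype.card ι' = Fintype.card {i : ι // ¬ i = i₀} := by
          apply Fintype.card_congr
          exact Equiv.refl _
        omega
      set B' := {x : Fin n → ℝ | (∀ j : ι', MvPolynomial.eval x (h j.1) ≤ 0) ∧ x - xh ∈ V}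
        with hB'
      have hBsubB' : B ⊆ B' := by
        intro x hx; rw [hB] at hx
        exact ⟨fun j => hx.1 j.1, hx.2⟩
      -- escape lemma
      have hesc : ∀ x ∈ B', ∃ T : ℝ, 0 ≤ T ∧ ∀ t ≥ T, x + t • d ∈ B := by
        intro x hx
        have hother : ∀ t : ℝ, 0 ≤ t → ∀ i : ι, i ≠ i₀ →
            MvPolynomial.eval (x + t • d) (h i) ≤ 0 := by
          intro t ht i hi
          have h0 : MvPolynomial.eval (x + (0:ℝ) • d) (h i) ≤ 0 := by
            simpa using hx.1 ⟨i, hi⟩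
          exact le_trans (monoi i x 0 t ht) h0
        have hstar : ∃ T : ℝ, 0 ≤ T ∧ ∀ t ≥ T, MvPolynomial.eval (x + t • d) (h i₀) ≤ 0 := by
          by_cases hzi : ∀ t : ℝ, MvPolynomial.eval (x + t • d) (h i₀) = MvPolynomial.eval x (h i₀)
          · refine ⟨0, le_refl _, fun t _ => ?_⟩
            rw [hzi t]
            exact inv_nonpos (hconv i₀) (hrayi i₀) hi₀ hzi
          · push_neg at hzi
            obtain ⟨t₃, ht₃⟩ := hzi
            exact poly_ray_small (fun s t hst => monoi i₀ x s t hst) ⟨t₃, ht₃⟩ 0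
        obtain ⟨T, hT0, hT⟩ := hstar
        refine ⟨T, hT0, fun t ht => ?_⟩
        have ht0 : (0:ℝ) ≤ t := le_trans hT0 ht
        rw [hB]
        refine ⟨fun i => ?_, ?_⟩
        · by_cases hii : i = i₀
          · rw [hii]; exact hT t ht
          · exact hother t ht0 i hii
        · have : x + t • d - xh = (x - xh) + t • d := by abel
          rw [this]
          exact V.add_mem hx.2 (V.smul_mem _ hdV)
      have hφlb : ∀ x ∈ B', μ ≤ MvPolynomial.eval x φ := by
        intro x hx
        obtain ⟨T, hT0, hT⟩ := hesc x hx
        have := hμle _ (hT T (le_refl T))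
        rw [hφinv x T] at this
        exact this
      have hrec := IH (Module.finrank ℝ V + Fintype.card ι')
        (by omega) ι' (inferInstance) V (le_refl _) (fun j => h j.1)
        (fun j => hconv j.1) φ hφ xh B' hB' (hne.mono hBsubB')
        ⟨μ, by rintro _ ⟨y, hy, rfl⟩; exact hφlb y hy⟩
      obtain ⟨xbar', hxbarB', hmin⟩ := hrec
      obtain ⟨T, hT0, hT⟩ := hesc xbar' hxbarB'
      refine ⟨xbar' + T • d, hT T (le_refl T), fun y hy => ?_⟩
      rw [hφinv xbar' T]
      exact hmin y (hBsubB' hy)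

lemma convexOn_finset_sum {κ : Type} (s : Finset κ) (f : κ → (Fin n → ℝ) → ℝ)
    (hf : ∀ j ∈ s, ConvexOn ℝ Set.univ (f j)) :
    ConvexOn ℝ Set.univ (fun x => ∑ j ∈ s, f j x) := by
  induction s using Finset.cons_induction with
  | empty => simpa using convexOn_const 0 convex_univ
  | cons a s ha ih =>
    simp only [Finset.sum_cons]
    exact (hf a (Finset.mem_cons_self a s)).add (ih fun j hj => hf j (Finset.mem_cons_of_mem hj))

end FWproof

theorem stmt_4 {n m p : ℕ} (F : Fin p → MvPolynomial (Fin n) ℝ)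
    (G : Fin m → MvPolynomial (Fin n) ℝ)
    (f : Fin p → (Fin n → ℝ) → ℝ) (hf : ∀ j, f j = fun x => MvPolynomial.eval x (F j))
    (g : Fin m → (Fin n → ℝ) → ℝ) (hg : ∀ i, g i = fun x => MvPolynomial.eval x (G i))
    (hconvf : ∀ j, ConvexOn ℝ Set.univ (f j)) (hconvg : ∀ i, ConvexOn ℝ Set.univ (g i))
    (K : Set (Fin n → ℝ)) (hK : K = {x | ∀ i, g i x ≤ 0}) (hKne : K.Nonempty) :
    (∃ xb ∈ K, ¬ ∃ x ∈ K, (∀ j, f j x ≤ f j xb) ∧ ∃ k, f k x < f k xb) ↔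
      ∃ z₀ : Fin n → ℝ,
        ((fun x => fun j => f j x) '' K ∩ {w | ∀ j, w j ≤ f j z₀}).Nonempty ∧
        Bornology.IsBounded ((fun x => fun j => f j x) '' K ∩ {w | ∀ j, w j ≤ f j z₀}) := by
  have hfx : ∀ j x, f j x = MvPolynomial.eval x (F j) := fun j x => by rw [hf j]
  have hgx : ∀ i x, g i x = MvPolynomial.eval x (G i) := fun i x => by rw [hg i]
  constructor
  · -- efficient solution ⇒ bounded nonempty section (the section is a single point)
    rintro ⟨xb, hxbK, hxbeff⟩
    refine ⟨xb, ⟨⟨fun j => f j xb, ⟨xb, hxbK, rfl⟩, fun j => le_refl _⟩, ?_⟩⟩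
    have hsub : (fun x => fun j => f j x) '' K ∩ {w | ∀ j, w j ≤ f j xb}
        ⊆ {fun j => f j xb} := by
      rintro w ⟨⟨x, hxK, rfl⟩, hle⟩
      have : ∀ j, f j x = f j xb := by
        intro j
        rcases lt_or_eq_of_le (hle j) with hlt | heq
        · exact absurd ⟨x, hxK, fun j' => hle j', j, hlt⟩ hxbeff
        · exact heq
      simp only [Set.mem_singleton_iff]
      funext j
      exact this j
    exact (Bornology.isBounded_singleton).subset hsub
  · -- bounded nonempty section ⇒ efficient solution
    rintro ⟨z₀, ⟨w₀, ⟨x₀, hx₀K, rfl⟩, hw₀le⟩, hbound⟩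
    obtain ⟨R, hR⟩ := isBounded_iff_forall_norm_le.mp hbound
    classical
    -- the constraint system: original constraints plus f_j ≤ f_j x₀
    set ι := Sum (Fin m) (Fin p) with hι
    set H : ι → MvPolynomial (Fin n) ℝ :=
      Sum.elim G (fun j => F j - MvPolynomial.C (MvPolynomial.eval x₀ (F j))) with hH
    have hHconv : ∀ i, ConvexOn ℝ Set.univ fun x => MvPolynomial.eval x (H i) := by
      rintro (i | j)
      · have := hconvg i
        rw [hg i] at this
        exact this
      · have heq : (fun x => MvPolynomial.eval x (H (Sum.inr j)))
            = fun x => f j x + (-(f j x₀)) := by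
          funext x
          simp [hH, hfx, sub_eq_add_neg]
        rw [heq]
        exact (hconvf j).add (convexOn_const _ convex_univ)
    set φ : MvPolynomial (Fin n) ℝ := ∑ j : Fin p, F j with hφdef
    have hφeval : ∀ x, MvPolynomial.eval x φ = ∑ j : Fin p, f j x := by
      intro x
      rw [hφdef, map_sum]
      exact Finset.sum_congr rfl fun j _ => (hfx j x).symm
    have hφconv : ConvexOn ℝ Set.univ fun x => MvPolynomial.eval x φ := by
      have heq : (fun x => MvPolynomial.eval x φ) = fun x => ∑ j : Fin p, f j x := by
        funext x; exact hφeval x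
      rw [heq]
      exact FWproof.convexOn_finset_sum _ _ (fun j _ => hconvf j)
    set B : Set (Fin n → ℝ) :=
      {x | (∀ i, MvPolynomial.eval x (H i) ≤ 0) ∧ x - x₀ ∈ (⊤ : Submodule ℝ (Fin n → ℝ))}
      with hBdef
    have hmemB : ∀ x, x ∈ B ↔ (x ∈ K ∧ ∀ j, f j x ≤ f j x₀) := by
      intro x
      rw [hBdef]
      simp only [Set.mem_setOf_eq, Submodule.mem_top, and_true, hK]
      constructor
      · intro hall
        refine ⟨fun i => ?_, fun j => ?_⟩
        · have := hall (Sum.inl i)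
          rw [hgx i]
          simpa [hH] using this
        · have := hall (Sum.inr j)
          simp only [hH, Sum.elim_inr, map_sub, MvPolynomial.eval_C, sub_nonpos] at this
          rw [hfx j, hfx j]
          exact this
      · rintro ⟨hg0, hf0⟩ (i | j)
        · have := hg0 i
          rw [hgx i] at this
          simpa [hH] using this
        · have := hf0 j
          rw [hfx j, hfx j] at this
          simp only [hH, Sum.elim_inr, map_sub, MvPolynomial.eval_C, sub_nonpos]
          exact this
    have hx₀B : x₀ ∈ B := (hmemB x₀).mpr ⟨hx₀K, fun j => le_refl _⟩
    -- image of B lies in the bounded section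
    have himg : ∀ x ∈ B, ∀ j, |f j x| ≤ R := by
      intro x hxB j
      obtain ⟨hxK, hxle⟩ := (hmemB x).mp hxB
      have hwmem : (fun j => f j x) ∈ (fun x => fun j => f j x) '' K ∩ {w | ∀ j, w j ≤ f j z₀} :=
        ⟨⟨x, hxK, rfl⟩, fun j' => le_trans (hxle j') (hw₀le j')⟩
      have h1 := hR _ hwmem
      have h2 : ‖f j x‖ ≤ ‖fun j => f j x‖ := norm_le_pi_norm (fun j' => f j' x) j
      rw [Real.norm_eq_abs] at h2
      exact le_trans h2 h1
    have hbddB : BddBelow ((fun x => MvPolynomial.eval x φ) '' B) := by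
      refine ⟨(p : ℝ) * (-R), ?_⟩
      rintro w ⟨x, hxB, rfl⟩
      show (p : ℝ) * (-R) ≤ MvPolynomial.eval x φ
      rw [hφeval]
      have : ∀ j ∈ Finset.univ, -R ≤ f j x := by
        intro j _
        have := himg x hxB j
        have := neg_abs_le (f j x)
        linarith
      calc (p : ℝ) * (-R) = ∑ _j : Fin p, (-R) := by
            rw [Finset.sum_const, Finset.card_univ, Fintype.card_fin, nsmul_eq_mul]
        _ ≤ ∑ j : Fin p, f j x := Finset.sum_le_sum this
    obtain ⟨xbar, hxbarB, hmin⟩ := FWproof.FWaux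
      (Module.finrank ℝ (⊤ : Submodule ℝ (Fin n → ℝ)) + Fintype.card ι) ι inferInstance
      (⊤ : Submodule ℝ (Fin n → ℝ)) (le_refl _) H hHconv φ hφconv x₀ B hBdef
      ⟨x₀, hx₀B⟩ hbddB
    obtain ⟨hxbarK, hxbarle⟩ := (hmemB xbar).mp hxbarB
    refine ⟨xbar, hxbarK, ?_⟩
    rintro ⟨x, hxK, hle, k, hlt⟩
    have hxB : x ∈ B := (hmemB x).mpr ⟨hxK, fun j => le_trans (hle j) (hxbarle j)⟩
    have hsum : ∑ j : Fin p, f j x < ∑ j : Fin p, f j xbar :=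
      Finset.sum_lt_sum (fun j _ => hle j) ⟨k, Finset.mem_univ _, hlt⟩
    have := hmin x hxB
    rw [hφeval, hφeval] at this
    linarith
end

section
/- For the (non-convex) polynomials f₁(x₁,x₂) = f₂(x₁,x₂) = (x₁x₂ − 1)² + x₂² on ℝ², the bi-objective problem of minimizing (f₁, f₂) over K = ℝ² has no efficient solution, even though for every (z₁,z₂) ∈ ℝ² the set f(K) ∩ (f(z₁,z₂) − ℝ²_+) is nonempty and bounded. -/
open Set

lemma sq_mul_sub_one_add_sq_pos (a b : ℝ) : 0 < (a * b - 1) ^ 2 + b ^ 2 := by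
  rcases eq_or_ne b 0 with rfl | hb
  · norm_num
  · positivity

/-- On the hyperbola `x₁ x₂ = 1` the value is `x₂ ^ 2`, so every positive level is attained. -/
lemma range_sq_mul_sub_one_add_sq :
    range (fun x : ℝ × ℝ => (x.1 * x.2 - 1) ^ 2 + x.2 ^ 2) = Ioi 0 := by
  refine Subset.antisymm (range_subset_iff.2 fun x => sq_mul_sub_one_add_sq_pos x.1 x.2) ?_
  intro c (hc : 0 < c)
  have hs : 0 < √c := Real.sqrt_pos.2 hc
  refine ⟨((√c)⁻¹, √c), ?_⟩
  simp only [inv_mul_cancel₀ hs.ne', sub_self, Real.sq_sqrt hc.le]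
  ring

lemma exists_lt_of_range_eq_Ioi {α : Type*} {g : α → ℝ} (hg : range g = Ioi 0) (x : α) :
    ∃ y, g y < g x := by
  have hx : g x ∈ Ioi 0 := hg ▸ mem_range_self x
  obtain ⟨y, hy⟩ : g x / 2 ∈ range g := hg ▸ half_pos (mem_Ioi.1 hx)
  exact ⟨y, hy ▸ half_lt_self hx⟩

theorem stmt_5 (f : ℝ × ℝ → ℝ) (hf : f = fun x => (x.1 * x.2 - 1)^2 + x.2^2)
    (F : ℝ × ℝ → ℝ × ℝ) (hF : F = fun x => (f x, f x)) :
    (∀ z : ℝ × ℝ,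
      (F '' Set.univ ∩ {w | w.1 ≤ f z ∧ w.2 ≤ f z}).Nonempty ∧
      Bornology.IsBounded (F '' Set.univ ∩ {w | w.1 ≤ f z ∧ w.2 ≤ f z})) ∧
    ¬ ∃ xb : ℝ × ℝ, ¬ ∃ x : ℝ × ℝ,
        (f x ≤ f xb ∧ f x ≤ f xb) ∧ (f x < f xb ∨ f x < f xb) := by
  have hrange : range f = Ioi 0 := hf ▸ range_sq_mul_sub_one_add_sq
  have hnonneg : ∀ x, 0 ≤ f x := fun x => (hrange ▸ mem_range_self x : f x ∈ Ioi 0).le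
  subst hF
  refine ⟨fun z => ⟨⟨(f z, f z), mem_image_of_mem _ (mem_univ z), le_rfl, le_rfl⟩, ?_⟩, ?_⟩
  · refine (Metric.isBounded_Icc 0 (f z)).prod (Metric.isBounded_Icc 0 (f z)) |>.subset ?_
    rintro _ ⟨⟨x, -, rfl⟩, hx₁, hx₂⟩
    exact ⟨⟨hnonneg x, hx₁⟩, ⟨hnonneg x, hx₂⟩⟩
  · rintro ⟨xb, hxb⟩
    obtain ⟨x, hx⟩ := exists_lt_of_range_eq_Ioi hrange xb
    exact hxb ⟨x, ⟨hx.le, hx.le⟩, Or.inl hx⟩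
end

section
/- Let f_j, g_i be convex polynomials, λ ∈ int ℝ^p_+, z₀ ∈ K, and suppose there exists x̃ with ∇²(λᵀf)(x̃) positive definite. Then for every ε > 0 there exist μ ∈ ℝ^m_+ and ν ∈ ℝ^p_+ such that λᵀf(x) − f̄_{z₀} + Σ_i μ_i g_i(x) + Σ_j ν_j (f_j(x) − f_j(z₀)) + ε > 0 for all x ∈ ℝ^n. -/
open Filter Topology Polynomial




lemma aux_contDiff_mveval {n : ℕ} (P : MvPolynomial (Fin n) ℝ) :
    ContDiff ℝ (⊤ : ℕ∞) (fun x : Fin n → ℝ => MvPolynomial.eval x P) := by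
  induction P using MvPolynomial.induction_on with
  | C a => simpa using contDiff_const
  | add p q hp hq => simpa using hp.add hq
  | mul_X p i hp =>
      simpa using hp.mul (ContinuousLinearMap.proj (R := ℝ) (φ := fun _ : Fin n => ℝ) i).contDiff



lemma aux_line_eval {n : ℕ} (P : MvPolynomial (Fin n) ℝ) (a v : Fin n → ℝ) (t : ℝ) :
    Polynomial.eval t (MvPolynomial.eval₂ Polynomial.C
        (fun i => Polynomial.C (a i) + Polynomial.C (v i) * Polynomial.X) P)
      = MvPolynomial.eval (a + t • v) P := by
  have h := MvPolynomial.eval₂_comp_left (Polynomial.evalRingHom t)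
    (Polynomial.C : ℝ →+* ℝ[X])
    (fun i => Polynomial.C (a i) + Polynomial.C (v i) * Polynomial.X) P
  simp only [coe_evalRingHom] at h
  rw [h]
  have : (Polynomial.evalRingHom t).comp (Polynomial.C : ℝ →+* ℝ[X]) = RingHom.id ℝ := by
    ext r; simp
  rw [this]
  have : (Polynomial.eval t ∘ fun i => Polynomial.C (a i) + Polynomial.C (v i) * Polynomial.X)
      = fun i => (a + t • v) i := by
    funext i; simp [Pi.add_apply, Pi.smul_apply]; ring
  rw [this]
  rfl


lemma aux_secondDeriv_line {n : ℕ} (h : (Fin n → ℝ) → ℝ) (hh : ContDiff ℝ (⊤ : ℕ∞) h)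
    (a v : Fin n → ℝ) :
    deriv (deriv (fun t : ℝ => h (a + t • v))) 0 = iteratedFDeriv ℝ 2 h a ![v, v] := by
  have hd : Differentiable ℝ h := hh.differentiable (by simp)
  have hline : ∀ t : ℝ, HasDerivAt (fun s : ℝ => a + s • v) v t := by
    intro t
    simpa using ((hasDerivAt_id t).smul_const v).const_add a
  have hq' : ∀ t : ℝ, deriv (fun s : ℝ => h (a + s • v)) t
      = fderiv ℝ h (a + t • v) v := by
    intro t
    exact ((hd (a + t • v)).hasFDerivAt.comp_hasDerivAt t (hline t)).deriv
  have hG : ContDiff ℝ (⊤ : ℕ∞) (fderiv ℝ h) := hh.fderiv_right (mod_cast le_top)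
  have hGd : HasFDerivAt (fderiv ℝ h) (fderiv ℝ (fderiv ℝ h) a) a :=
    (hG.differentiable (by simp) a).hasFDerivAt
  have hcomp : HasDerivAt (fun t : ℝ => fderiv ℝ h (a + t • v))
      (fderiv ℝ (fderiv ℝ h) a v) 0 := by
    have h0 : a + (0:ℝ) • v = a := by simp
    have := (h0 ▸ hGd).comp_hasDerivAt 0 (hline 0)
    rw [h0] at this
    exact this
  have happ : HasDerivAt (fun t : ℝ => fderiv ℝ h (a + t • v) v)
      (fderiv ℝ (fderiv ℝ h) a v v) 0 := by
    have := hcomp.clm_apply (hasDerivAt_const (0:ℝ) v)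
    simpa using this
  rw [iteratedFDeriv_two_apply]
  simp only [Matrix.cons_val_zero, Matrix.cons_val_one, Matrix.head_cons]
  rw [show deriv (fun t : ℝ => h (a + t • v)) = fun t => fderiv ℝ h (a + t • v) v
    from funext hq']
  exact happ.deriv


lemma aux_poly_tendsto (Q : Polynomial ℝ)
    (hconv : ConvexOn ℝ Set.univ (fun t => Polynomial.eval t Q))
    (h2 : 0 < Polynomial.eval 0 Q.derivative.derivative) :
    Tendsto (fun t => Polynomial.eval t Q) atTop atTop := by
  have hderiv : deriv (fun t => Polynomial.eval t Q) = fun t => Polynomial.eval t Q.derivative :=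
    funext fun t => Polynomial.deriv (p := Q)
  have hmono : Monotone (fun t => Polynomial.eval t Q.derivative) := by
    have hm := hconv.monotoneOn_deriv (fun x _ => Q.differentiableAt)
    rw [hderiv] at hm
    exact fun x y hxy => hm (Set.mem_univ x) (Set.mem_univ y) hxy
  have hD2 : Q.derivative.derivative ≠ 0 := by
    intro hz; rw [hz] at h2; simp at h2
  have hdeg : 0 < Q.derivative.degree := by
    by_contra hle
    push_neg at hle
    have : Q.derivative = Polynomial.C (Q.derivative.coeff 0) :=
      Polynomial.eq_C_of_degree_le_zero hle
    rw [this] at hD2; simp at hD2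
  have hlc : 0 ≤ Q.derivative.leadingCoeff := by
    by_contra hneg
    push_neg at hneg
    have hbot := Polynomial.tendsto_atBot_of_leadingCoeff_nonpos Q.derivative hdeg hneg.le
    obtain ⟨t, ht⟩ := ((hbot.eventually_le_atBot (Polynomial.eval 0 Q.derivative - 1)).and
      (eventually_ge_atTop (0:ℝ))).exists
    have hmt := hmono ht.2
    have := ht.1
    linarith
  have hT : Tendsto (fun t => Polynomial.eval t Q.derivative) atTop atTop :=
    Polynomial.tendsto_atTop_of_leadingCoeff_nonneg Q.derivative hdeg hlc
  obtain ⟨T, hT1⟩ := (hT.eventually_ge_atTop 1).exists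
  have key : ∀ t, T < t → Polynomial.eval T Q + (t - T) ≤ Polynomial.eval t Q := by
    intro t htT
    have hs := hconv.deriv_le_slope (Set.mem_univ T) (Set.mem_univ t) htT Q.differentiableAt
    rw [hderiv] at hs
    have h1 : (1:ℝ) ≤ slope (fun t => Polynomial.eval t Q) T t := le_trans hT1 hs
    rw [slope_def_field] at h1
    have hpos : 0 < t - T := by linarith
    rw [le_div_iff₀ hpos] at h1
    linarith
  have hlow : Tendsto (fun t : ℝ => Polynomial.eval T Q + (t - T)) atTop atTop :=
    tendsto_atTop_add_const_left _ _ (tendsto_atTop_add_const_right _ _ tendsto_id)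
  refine tendsto_atTop_mono' atTop ?_ hlow
  filter_upwards [eventually_gt_atTop T] with t ht using key t ht


lemma aux_sublevel_bounded {n : ℕ} (h : (Fin n → ℝ) → ℝ) (hcont : Continuous h)
    (hconv : ConvexOn ℝ Set.univ h) (xt : Fin n → ℝ)
    (hray : ∀ v : Fin n → ℝ, ‖v‖ = 1 →
      Tendsto (fun t : ℝ => h (xt + t • v)) atTop atTop)
    (c : ℝ) : Bornology.IsBounded {x | h x ≤ c} := by
  by_contra hub
  rw [Metric.isBounded_iff_subset_closedBall xt] at hub
  push_neg at hub
  have hex : ∀ k : ℕ, ∃ x, h x ≤ c ∧ (k : ℝ) < ‖x - xt‖ := by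
    intro k
    obtain ⟨x, hx, hxball⟩ := Set.not_subset.1 (hub k)
    exact ⟨x, hx, by simpa [Metric.mem_closedBall, dist_eq_norm, not_le] using hxball⟩
  choose X hXc hXd using hex
  set d : ℕ → ℝ := fun k => ‖X k - xt‖ with hd
  have hdpos : ∀ k, 0 < d k := fun k => lt_of_le_of_lt (Nat.cast_nonneg k) (hXd k)
  set V : ℕ → (Fin n → ℝ) := fun k => (d k)⁻¹ • (X k - xt) with hV
  have hVs : ∀ k, V k ∈ Metric.sphere (0 : Fin n → ℝ) 1 := by
    intro k
    simp only [mem_sphere_zero_iff_norm, hV, norm_smul, norm_inv, Real.norm_eq_abs,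
      abs_of_pos (hdpos k)]
    exact inv_mul_cancel₀ (hdpos k).ne'
  obtain ⟨v, hvmem, φ, hφ, hvlim⟩ :=
    (isCompact_sphere (0 : Fin n → ℝ) 1).tendsto_subseq hVs
  have hvnorm : ‖v‖ = 1 := mem_sphere_zero_iff_norm.1 hvmem
  have claim : ∀ t : ℝ, 0 ≤ t → h (xt + t • v) ≤ max (h xt) c := by
    intro t ht
    have hev : ∀ᶠ k in atTop, h (xt + t • V (φ k)) ≤ max (h xt) c := by
      filter_upwards [eventually_ge_atTop (Nat.ceil t)] with k hk
      have hdk : t ≤ d (φ k) := by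
        have h1 : (k : ℝ) < d (φ k) := lt_of_le_of_lt (by exact_mod_cast hφ.id_le k) (hXd (φ k))
        have h2 : t ≤ (Nat.ceil t : ℝ) := Nat.le_ceil t
        have h3 : (Nat.ceil t : ℝ) ≤ (k : ℝ) := by exact_mod_cast hk
        linarith
      set θ : ℝ := t / d (φ k) with hθ
      have hθ0 : 0 ≤ θ := div_nonneg ht (hdpos _).le
      have hθ1 : θ ≤ 1 := (div_le_one (hdpos _)).2 hdk
      have heq : xt + t • V (φ k) = (1 - θ) • xt + θ • X (φ k) := by
        have : θ • (X (φ k) - xt) = t • V (φ k) := by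
          rw [hV, smul_smul, hθ, div_eq_mul_inv]
        rw [sub_smul, one_smul, ← this]
        module
      rw [heq]
      calc h ((1 - θ) • xt + θ • X (φ k))
          ≤ (1 - θ) * h xt + θ * h (X (φ k)) := by
            simpa using hconv.2 (Set.mem_univ xt) (Set.mem_univ (X (φ k)))
              (by linarith : (0:ℝ) ≤ 1 - θ) hθ0 (by ring)
        _ ≤ (1 - θ) * max (h xt) c + θ * max (h xt) c := by
            have h1 : h xt ≤ max (h xt) c := le_max_left _ _
            have h2 : h (X (φ k)) ≤ max (h xt) c := le_trans (hXc _) (le_max_right _ _)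
            have := hXc (φ k)
            nlinarith
        _ = max (h xt) c := by ring
    have hlim : Tendsto (fun k => h (xt + t • V (φ k))) atTop (𝓝 (h (xt + t • v))) := by
      exact (hcont.tendsto _).comp (tendsto_const_nhds.add (hvlim.const_smul t))
    exact le_of_tendsto hlim hev
  obtain ⟨t, h1, h2⟩ := (((hray v hvnorm).eventually_gt_atTop (max (h xt) c)).and
    (eventually_ge_atTop (0:ℝ))).exists
  exact absurd (claim t h2) (not_le.2 h1)


lemma aux_A_isClosed {n m p : ℕ} (g : Fin m → (Fin n → ℝ) → ℝ) (f : Fin p → (Fin n → ℝ) → ℝ)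
    (h : (Fin n → ℝ) → ℝ) (z₀ : Fin n → ℝ)
    (hgc : ∀ i, Continuous (g i)) (hfc : ∀ j, Continuous (f j)) (hhc : Continuous h)
    (hcomp : ∀ c : ℝ, IsCompact {x : Fin n → ℝ | h x ≤ c}) :
    IsClosed {a : (Fin m → ℝ) × (Fin p → ℝ) × ℝ | ∃ x : Fin n → ℝ,
      (∀ i, g i x ≤ a.1 i) ∧ (∀ j, f j x - f j z₀ ≤ a.2.1 j) ∧ h x ≤ a.2.2} := by
  apply IsSeqClosed.isClosed
  intro u a hu hlim
  have hu2 : Tendsto (fun k => (u k).2) atTop (𝓝 a.2) := (continuous_snd.tendsto a).comp hlim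
  have hu1 : Tendsto (fun k => (u k).1) atTop (𝓝 a.1) := (continuous_fst.tendsto a).comp hlim
  have hu21 : Tendsto (fun k => (u k).2.1) atTop (𝓝 a.2.1) :=
    (continuous_fst.tendsto a.2).comp hu2
  have hu22 : Tendsto (fun k => (u k).2.2) atTop (𝓝 a.2.2) :=
    (continuous_snd.tendsto a.2).comp hu2
  choose x hx1 hx2 hx3 using hu
  obtain ⟨N, hN⟩ := eventually_atTop.1 (hu22.eventually_lt_const (lt_add_one a.2.2))
  have hy : ∀ k : ℕ, x (k + N) ∈ {x : Fin n → ℝ | h x ≤ a.2.2 + 1} := by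
    intro k
    exact le_trans (hx3 (k + N)) (hN (k + N) (Nat.le_add_left N k)).le
  obtain ⟨xb, _, ψ, hψ, hxlim⟩ := (hcomp (a.2.2 + 1)).tendsto_subseq hy
  have hidx : Tendsto (fun k => ψ k + N) atTop atTop :=
    (tendsto_add_atTop_nat N).comp hψ.tendsto_atTop
  refine ⟨xb, fun i => ?_, fun j => ?_, ?_⟩
  · refine le_of_tendsto_of_tendsto' (((hgc i).tendsto _).comp hxlim)
      ((((continuous_apply i).tendsto _).comp hu1).comp hidx) (fun k => hx1 _ i)
  · have hTf : Tendsto (fun k => f j (x (ψ k + N)) - f j z₀) atTop (𝓝 (f j xb - f j z₀)) :=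
      (((hfc j).tendsto _).comp hxlim).sub_const _
    exact le_of_tendsto_of_tendsto' hTf
      ((((continuous_apply j).tendsto _).comp hu21).comp hidx) (fun k => hx2 _ j)
  · exact le_of_tendsto_of_tendsto' ((hhc.tendsto _).comp hxlim)
      (hu22.comp hidx) (fun k => hx3 _)


lemma aux_decomp {m p : ℕ} (ℓ : ((Fin m → ℝ) × (Fin p → ℝ) × ℝ) →L[ℝ] ℝ)
    (a : (Fin m → ℝ) × (Fin p → ℝ) × ℝ) :
    ℓ a = ∑ i, a.1 i * ℓ ((fun j => if i = j then (1:ℝ) else 0), 0, 0)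
      + ∑ j, a.2.1 j * ℓ (0, (fun j' => if j = j' then (1:ℝ) else 0), 0)
      + a.2.2 * ℓ (0, 0, 1) := by
  have h1 : a = ((a.1, 0, 0) : (Fin m → ℝ) × (Fin p → ℝ) × ℝ) + (0, a.2.1, 0) + (0, 0, a.2.2) := by
    refine Prod.ext ?_ (Prod.ext ?_ ?_) <;> simp
  have e1 : ℓ (a.1, 0, 0) = ∑ i, a.1 i * ℓ ((fun j => if i = j then (1:ℝ) else 0), 0, 0) := by
    have := (ℓ.toLinearMap.comp
      (LinearMap.inl ℝ (Fin m → ℝ) ((Fin p → ℝ) × ℝ))).pi_apply_eq_sum_univ a.1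
    simp at this
    exact this
  have e2 : ℓ (0, a.2.1, 0)
      = ∑ j, a.2.1 j * ℓ (0, (fun j' => if j = j' then (1:ℝ) else 0), 0) := by
    have := (ℓ.toLinearMap.comp
      ((LinearMap.inr ℝ (Fin m → ℝ) ((Fin p → ℝ) × ℝ)).comp
        (LinearMap.inl ℝ (Fin p → ℝ) ℝ))).pi_apply_eq_sum_univ a.2.1
    simpa using this
  have e3 : ℓ (0, 0, a.2.2) = a.2.2 * ℓ (0, 0, 1) := by
    have h2 : ((0, 0, a.2.2) : (Fin m → ℝ) × (Fin p → ℝ) × ℝ) = a.2.2 • (0, 0, 1) := by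
      refine Prod.ext ?_ (Prod.ext ?_ ?_) <;> simp
    rw [h2, map_smul, smul_eq_mul]
  calc ℓ a = ℓ (((a.1, 0, 0) : (Fin m → ℝ) × (Fin p → ℝ) × ℝ) + (0, a.2.1, 0) + (0, 0, a.2.2)) := by
        rw [← h1]
    _ = _ := by rw [map_add, map_add, e1, e2, e3]



theorem stmt_12 {n m p : ℕ} (F : Fin p → MvPolynomial (Fin n) ℝ)
    (G : Fin m → MvPolynomial (Fin n) ℝ)
    (f : Fin p → (Fin n → ℝ) → ℝ) (hf : ∀ j, f j = fun x => MvPolynomial.eval x (F j))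
    (g : Fin m → (Fin n → ℝ) → ℝ) (hg : ∀ i, g i = fun x => MvPolynomial.eval x (G i))
    (hconvf : ∀ j, ConvexOn ℝ Set.univ (f j)) (hconvg : ∀ i, ConvexOn ℝ Set.univ (g i))
    (lam : Fin p → ℝ) (hlam : ∀ j, 0 < lam j)
    (z₀ : Fin n → ℝ) (hz₀ : ∀ i, g i z₀ ≤ 0)
    (xt : Fin n → ℝ)
    (hPD : ∀ v : Fin n → ℝ, v ≠ 0 →
      0 < iteratedFDeriv ℝ 2 (fun x => ∑ j, lam j * f j x) xt ![v, v])
    (fbar : ℝ)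
    (hfbar : (∀ x : Fin n → ℝ, (∀ i, g i x ≤ 0) → (∀ j, f j x ≤ f j z₀) →
        fbar ≤ ∑ j, lam j * f j x) ∧
      ∃ x : Fin n → ℝ, (∀ i, g i x ≤ 0) ∧ (∀ j, f j x ≤ f j z₀) ∧
        ∑ j, lam j * f j x = fbar) :
    ∀ ε : ℝ, 0 < ε → ∃ (μ : Fin m → ℝ) (ν : Fin p → ℝ),
      (∀ i, 0 ≤ μ i) ∧ (∀ j, 0 ≤ ν j) ∧
      ∀ x : Fin n → ℝ,
        0 < ∑ j, lam j * f j x - fbar + ∑ i, μ i * g i x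
            + ∑ j, ν j * (f j x - f j z₀) + ε := by
  intro ε hε
  set h : (Fin n → ℝ) → ℝ := fun x => ∑ j, lam j * f j x with hhdef
  -- basic facts about h
  set P : MvPolynomial (Fin n) ℝ := ∑ j, MvPolynomial.C (lam j) * F j with hPdef
  have hP : h = fun x => MvPolynomial.eval x P := by
    funext x
    simp only [hhdef, hPdef, map_sum, MvPolynomial.eval_mul, MvPolynomial.eval_C]
    exact Finset.sum_congr rfl fun j _ => by rw [hf j]
  have hcont : Continuous h := by rw [hP]; exact MvPolynomial.continuous_eval P
  have hgcont : ∀ i, Continuous (g i) := by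
    intro i; rw [hg i]; exact MvPolynomial.continuous_eval (G i)
  have hfcont : ∀ j, Continuous (f j) := by
    intro j; rw [hf j]; exact MvPolynomial.continuous_eval (F j)
  have hhC : ContDiff ℝ (⊤ : ℕ∞) h := by rw [hP]; exact aux_contDiff_mveval P
  have hconvh : ConvexOn ℝ Set.univ h := by
    refine ⟨convex_univ, fun x _ y _ a b ha hb hab => ?_⟩
    simp only [hhdef, smul_eq_mul, Finset.mul_sum, ← Finset.sum_add_distrib]
    refine Finset.sum_le_sum fun j _ => ?_
    have hcv := (hconvf j).2 (Set.mem_univ x) (Set.mem_univ y) ha hb hab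
    simp only [smul_eq_mul] at hcv
    nlinarith [(hlam j).le, hcv]
  -- coercivity
  have hray : ∀ v : Fin n → ℝ, ‖v‖ = 1 →
      Tendsto (fun t : ℝ => h (xt + t • v)) atTop atTop := by
    intro v hv
    have hvne : v ≠ 0 := by intro hz; rw [hz] at hv; simp at hv
    set Q : Polynomial ℝ := MvPolynomial.eval₂ Polynomial.C
      (fun i => Polynomial.C (xt i) + Polynomial.C (v i) * Polynomial.X) P with hQdef
    have hqQ : (fun t : ℝ => h (xt + t • v)) = fun t => Polynomial.eval t Q := by
      funext t; rw [hP, hQdef, aux_line_eval]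
    have hqconv : ConvexOn ℝ Set.univ (fun t : ℝ => Polynomial.eval t Q) := by
      rw [← hqQ]
      have hcomp := hconvh.comp_affineMap (AffineMap.lineMap xt (xt + v) : ℝ →ᵃ[ℝ] (Fin n → ℝ))
      rw [Set.preimage_univ] at hcomp
      have hαeq : (fun t : ℝ => h (xt + t • v)) = h ∘ (AffineMap.lineMap xt (xt + v)) := by
        funext t
        simp only [Function.comp_apply, AffineMap.lineMap_apply, vsub_eq_sub, vadd_eq_add,
          add_sub_cancel_left]
        congr 1
        module
      rw [hαeq]
      exact hcomp
    have hderivQ : deriv (deriv (fun t => Polynomial.eval t Q)) 0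
        = Polynomial.eval 0 Q.derivative.derivative := by
      rw [show deriv (fun t => Polynomial.eval t Q) = fun t => Polynomial.eval t Q.derivative
        from funext fun t => Polynomial.deriv (p := Q)]
      exact Polynomial.deriv (p := Q.derivative)
    have hd2 : 0 < Polynomial.eval 0 Q.derivative.derivative := by
      rw [← hderivQ, ← hqQ, aux_secondDeriv_line h hhC xt v]
      exact hPD v hvne
    rw [hqQ]
    exact aux_poly_tendsto Q hqconv hd2
  have hcompact : ∀ c : ℝ, IsCompact {x : Fin n → ℝ | h x ≤ c} := by
    intro c
    exact Metric.isCompact_of_isClosed_isBounded (isClosed_le hcont continuous_const)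
      (aux_sublevel_bounded h hcont hconvh xt hray c)
  -- the set A
  set A : Set ((Fin m → ℝ) × (Fin p → ℝ) × ℝ) := {a | ∃ x : Fin n → ℝ,
      (∀ i, g i x ≤ a.1 i) ∧ (∀ j, f j x - f j z₀ ≤ a.2.1 j) ∧ h x ≤ a.2.2} with hAdef
  have hAclosed : IsClosed A := aux_A_isClosed g f h z₀ hgcont hfcont hcont hcompact
  have hAconv : Convex ℝ A := by
    rintro a ⟨x, hax1, hax2, hax3⟩ b ⟨y, hby1, hby2, hby3⟩ s t hs ht hst
    refine ⟨s • x + t • y, fun i => ?_, fun j => ?_, ?_⟩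
    · have hcv := (hconvg i).2 (Set.mem_univ x) (Set.mem_univ y) hs ht hst
      simp only [smul_eq_mul] at hcv
      have h1 : s * g i x + t * g i y ≤ s * a.1 i + t * b.1 i := by
        have := hax1 i; have := hby1 i; nlinarith
      simpa [Prod.smul_fst, Pi.smul_apply, smul_eq_mul] using le_trans hcv h1
    · have hcv := (hconvf j).2 (Set.mem_univ x) (Set.mem_univ y) hs ht hst
      simp only [smul_eq_mul] at hcv
      have h1 : f j (s • x + t • y) - f j z₀ ≤ s * a.2.1 j + t * b.2.1 j := by
        have h2 := hax2 j; have h3 := hby2 j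
        have e2 : s * (f j x - f j z₀) ≤ s * a.2.1 j := mul_le_mul_of_nonneg_left h2 hs
        have e3 : t * (f j y - f j z₀) ≤ t * b.2.1 j := mul_le_mul_of_nonneg_left h3 ht
        have hzz : (s + t) * f j z₀ = f j z₀ := by rw [hst, one_mul]
        nlinarith [e2, e3, hzz, hcv]
      simpa [Pi.smul_apply, smul_eq_mul] using h1
    · have hcv := hconvh.2 (Set.mem_univ x) (Set.mem_univ y) hs ht hst
      simp only [smul_eq_mul] at hcv
      have h1 : s * h x + t * h y ≤ s * a.2.2 + t * b.2.2 := by nlinarith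
      simpa [smul_eq_mul] using le_trans hcv h1
  have hfz : fbar ≤ h z₀ := hfbar.1 z₀ hz₀ (fun j => le_refl _)
  have hq0 : ((0, 0, fbar - ε) : (Fin m → ℝ) × (Fin p → ℝ) × ℝ) ∉ A := by
    rintro ⟨x, hx1, hx2, hx3⟩
    have h1 := hfbar.1 x (fun i => by simpa using hx1 i)
      (fun j => by have := hx2 j; simp at this; linarith)
    simp only at hx3
    have : fbar ≤ h x := h1
    linarith
  obtain ⟨ℓ, u₀, hA, hqsep⟩ := geometric_hahn_banach_closed_point hAconv hAclosed hq0
  -- components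
  set s₀ : ℝ := ℓ (0, 0, 1) with hs₀
  set μ' : Fin m → ℝ := fun i => ℓ ((fun j => if i = j then (1:ℝ) else 0), 0, 0) with hμ'
  set ν' : Fin p → ℝ := fun j => ℓ (0, (fun j' => if j = j' then (1:ℝ) else 0), 0) with hν'
  have hr : ∀ r : ℝ, ℓ (0, 0, r) = r * s₀ := by
    intro r
    rw [show ((0, 0, r) : (Fin m → ℝ) × (Fin p → ℝ) × ℝ) = r • (0, 0, 1) from by
      refine Prod.ext ?_ (Prod.ext ?_ ?_) <;> simp, map_smul, smul_eq_mul]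
  have ha₀ : ((0, 0, h z₀) : (Fin m → ℝ) × (Fin p → ℝ) × ℝ) ∈ A :=
    ⟨z₀, fun i => by simpa using hz₀ i, fun j => by simp, le_refl _⟩
  have h1 : h z₀ * s₀ < u₀ := by have := hA _ ha₀; rwa [hr] at this
  have h₂fin : u₀ < (fbar - ε) * s₀ := by rwa [hr] at hqsep
  have hsneg : s₀ < 0 := by
    by_contra hge
    push_neg at hge
    have h3 : fbar - ε ≤ h z₀ := by linarith
    nlinarith [h1, h₂fin, mul_le_mul_of_nonneg_right h3 hge]
  -- sign of the multipliers
  have hμ'nonpos : ∀ i, μ' i ≤ 0 := by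
    intro i
    by_contra hpos
    push_neg at hpos
    set t : ℝ := (u₀ - h z₀ * s₀ + 1) / μ' i with htdef
    have htpos : 0 < t := div_pos (by linarith) hpos
    have hmem : ((fun j => if i = j then t else 0 : Fin m → ℝ), 0, h z₀) ∈ A := by
      refine ⟨z₀, fun i' => ?_, fun j => by simp, le_refl _⟩
      by_cases hii : i = i'
      · subst hii; simpa using le_trans (hz₀ i) htpos.le
      · simpa [hii] using hz₀ i'
    have hdec : ℓ ((fun j => if i = j then t else 0 : Fin m → ℝ), 0, h z₀)
        = t * μ' i + h z₀ * s₀ := by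
      rw [show ((fun j => if i = j then t else 0 : Fin m → ℝ), (0:Fin p → ℝ), h z₀)
          = t • ((fun j => if i = j then (1:ℝ) else 0 : Fin m → ℝ), (0:Fin p → ℝ), (0:ℝ))
            + (h z₀) • ((0:Fin m → ℝ), (0:Fin p → ℝ), (1:ℝ)) from by
        refine Prod.ext ?_ (Prod.ext ?_ ?_) <;> · funext <;> simp [mul_ite] <;> ring_nf <;> simp]
      rw [map_add, map_smul, map_smul, smul_eq_mul, smul_eq_mul, hμ', hs₀]
    have hlt := hA _ hmem
    rw [hdec] at hlt
    have : t * μ' i = u₀ - h z₀ * s₀ + 1 := by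
      rw [htdef]; field_simp
    linarith
  have hν'nonpos : ∀ j, ν' j ≤ 0 := by
    intro j
    by_contra hpos
    push_neg at hpos
    set t : ℝ := (u₀ - h z₀ * s₀ + 1) / ν' j with htdef
    have htpos : 0 < t := div_pos (by linarith) hpos
    have hmem : ((0 : Fin m → ℝ), (fun j' => if j = j' then t else 0 : Fin p → ℝ), h z₀) ∈ A := by
      refine ⟨z₀, fun i => by simpa using hz₀ i, fun j' => ?_, le_refl _⟩
      by_cases hjj : j = j'
      · subst hjj; simpa using htpos.le
      · simp [hjj]
    have hdec : ℓ ((0 : Fin m → ℝ), (fun j' => if j = j' then t else 0 : Fin p → ℝ), h z₀)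
        = t * ν' j + h z₀ * s₀ := by
      rw [show ((0:Fin m → ℝ), (fun j' => if j = j' then t else 0 : Fin p → ℝ), h z₀)
          = t • ((0:Fin m → ℝ), (fun j' => if j = j' then (1:ℝ) else 0 : Fin p → ℝ), (0:ℝ))
            + (h z₀) • ((0:Fin m → ℝ), (0:Fin p → ℝ), (1:ℝ)) from by
        refine Prod.ext ?_ (Prod.ext ?_ ?_) <;> · funext <;> simp [mul_ite] <;> ring_nf <;> simp]
      rw [map_add, map_smul, map_smul, smul_eq_mul, smul_eq_mul, hν', hs₀]
    have hlt := hA _ hmem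
    rw [hdec] at hlt
    have : t * ν' j = u₀ - h z₀ * s₀ + 1 := by
      rw [htdef]; field_simp
    linarith
  refine ⟨fun i => μ' i / s₀, fun j => ν' j / s₀,
    fun i => div_nonneg_iff.mpr (Or.inr ⟨hμ'nonpos i, hsneg.le⟩),
    fun j => div_nonneg_iff.mpr (Or.inr ⟨hν'nonpos j, hsneg.le⟩), ?_⟩
  intro x
  have hmemx : ((fun i => g i x), (fun j => f j x - f j z₀), h x) ∈ A :=
    ⟨x, fun i => le_refl _, fun j => le_refl _, le_refl _⟩
  have hlt := hA _ hmemx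
  have hdec := aux_decomp ℓ ((fun i => g i x), (fun j => f j x - f j z₀), h x)
  have hμconv : ∀ i, ℓ ((fun j => if i = j then (1:ℝ) else 0), 0, 0) = μ' i := fun i => rfl
  have hνconv : ∀ j, ℓ (0, (fun j' => if j = j' then (1:ℝ) else 0), 0) = ν' j := fun j => rfl
  have hsconv : ℓ (0, 0, 1) = s₀ := rfl
  simp only [hμconv, hνconv, hsconv] at hdec
  have hTs : ∑ i, g i x * μ' i + ∑ j, (f j x - f j z₀) * ν' j + h x * s₀
      < (fbar - ε) * s₀ := by
    rw [← hdec]; exact lt_trans hlt h₂fin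
  have hTmul : (∑ i, μ' i / s₀ * g i x + ∑ j, ν' j / s₀ * (f j x - f j z₀) + h x) * s₀
      = ∑ i, g i x * μ' i + ∑ j, (f j x - f j z₀) * ν' j + h x * s₀ := by
    rw [add_mul, add_mul, Finset.sum_mul, Finset.sum_mul]
    congr 1
    congr 1
    · exact Finset.sum_congr rfl fun i _ => by field_simp [hsneg.ne]
    · exact Finset.sum_congr rfl fun j _ => by field_simp [hsneg.ne]
  have hkey : fbar - ε < ∑ i, μ' i / s₀ * g i x + ∑ j, ν' j / s₀ * (f j x - f j z₀) + h x := by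
    by_contra hle
    push_neg at hle
    have := mul_le_mul_of_nonpos_right hle hsneg.le
    rw [hTmul] at this
    linarith
  have hxh : h x = ∑ j, lam j * f j x := rfl
  linarith [hkey]
end

section
/- Let f₀, g_i (i=1,…,m), h_j (j=1,…,p) be convex polynomials on ℝ^n with feasible set F = {x : g_i(x) ≤ 0 ∀i, h_j(x) ≤ 0 ∀j} nonempty, and let f* = inf_F f₀ be finite. Suppose f₀(x) − f* + ε ≤ 0 together with g_i(x) ≤ δ_k ∀i and h_j(x) ≤ δ_k ∀j has solutions x_k for a sequence δ_k → 0⁺. Then there exists x* with f₀(x*) − f* + ε ≤ 0, g_i(x*) ≤ 0 ∀i, h_j(x*) ≤ 0 ∀j — a contradiction when ε > 0. Consequently, for every ε > 0 there exists δ > 0 such that f₀(x) − f* + ε > 0 for all x in the enlarged set {x : g_i(x) ≤ δ ∀i, h_j(x) ≤ δ ∀j}. -/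
/-!
Frank–Wolfe / Belousov–Klatte argument, by induction on the dimension. Suppose the convex
polynomial system `q i ≤ δ` is solvable for every `δ > 0`. If the solutions for `δ ≤ 1` stay
bounded, a limit point solves `q i ≤ 0`. Otherwise, normalising an unbounded sequence of them
gives a direction `d` along which every `q i` is nonincreasing. A nonincreasing polynomial in
one variable is constant or tends to `-∞`, and by convexity this behaviour is the same on all
lines parallel to `d`. The constraints constant along `d` are solved by induction on a
hyperplane transversal to `d`; going far enough along `d` from that solution makes the other
constraints nonpositive too. If `f₀ - f* + ε ≤ 0` were solvable with all constraints relaxed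
by arbitrarily small `δ`, this would yield a feasible point with `f₀ < f*`.
-/

open Filter Topology Set Polynomial Bornology

lemma Polynomial.eval_eq_eval_zero_of_antitone {p : ℝ[X]} (hanti : Antitone fun t => p.eval t)
    (hbot : ¬ Tendsto (fun t => p.eval t) atTop atBot) (t : ℝ) : p.eval t = p.eval 0 := by
  suffices hdeg : p.degree ≤ 0 by
    rw [eq_C_of_degree_le_zero hdeg]
    simp
  by_contra! hdeg
  rcases le_or_gt p.leadingCoeff 0 with hlc | hlc
  · exact hbot (p.tendsto_atBot_of_leadingCoeff_nonpos hdeg hlc)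
  · obtain ⟨s, hs, hs0⟩ := ((p.tendsto_atTop_of_leadingCoeff_nonneg hdeg hlc.le).eventually
      (eventually_gt_atTop (p.eval 0)) |>.and (eventually_ge_atTop 0)).exists
    exact (hanti hs0).not_gt hs

section Lines

variable {E F : Type*} [AddCommGroup E] [Module ℝ E] [AddCommGroup F] [Module ℝ F]

def IsPolynomialOnLines (q : E → ℝ) : Prop :=
  ∀ x d : E, ∃ p : ℝ[X], ∀ t : ℝ, q (x + t • d) = p.eval t

def IsRecessionDirection (q : E → ℝ) (d : E) : Prop :=
  ∀ x (t : ℝ), 0 ≤ t → q (x + t • d) ≤ q x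

def IsConstantAlong (q : E → ℝ) (d : E) : Prop :=
  ∀ x (t : ℝ), q (x + t • d) = q x

lemma MvPolynomial.isPolynomialOnLines_eval {σ : Type*} (Q : MvPolynomial σ ℝ) :
    IsPolynomialOnLines fun x : σ → ℝ => MvPolynomial.eval x Q := by
  intro x d
  refine ⟨aeval (fun j => Polynomial.C (x j) + Polynomial.C (d j) * Polynomial.X) Q,
    fun t => ?_⟩
  rw [← Polynomial.coe_aeval_eq_eval, ← AlgHom.comp_apply, comp_aeval, aeval_eq_eval]
  congr 2
  funext j
  simp [mul_comm (d j)]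

lemma IsPolynomialOnLines.add_const {q : E → ℝ} (hq : IsPolynomialOnLines q) (c : ℝ) :
    IsPolynomialOnLines fun x => q x + c := fun x d =>
  let ⟨p, hp⟩ := hq x d
  ⟨p + C c, fun t => by simp [hp]⟩

lemma IsPolynomialOnLines.comp_linearMap {q : E → ℝ} (hq : IsPolynomialOnLines q)
    (L : F →ₗ[ℝ] E) : IsPolynomialOnLines (q ∘ L) := fun x d =>
  let ⟨p, hp⟩ := hq (L x) (L d)
  ⟨p, fun t => by simp [hp]⟩

lemma ConvexOn.tendsto_atBot_of_tendsto_atBot {q : E → ℝ} (hq : ConvexOn ℝ univ q) {w d : E}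
    (hw : Tendsto (fun t : ℝ => q (w + t • d)) atTop atBot) (z : E) :
    Tendsto (fun t : ℝ => q (z + t • d)) atTop atBot := by
  have hmid (t : ℝ) :
      q (z + t • d) ≤ 1 / 2 * q (w + (2 * t) • d) + 1 / 2 * q ((2 : ℝ) • z - w) := by
    have hz :
        z + t • d = (1 / 2 : ℝ) • (w + (2 * t) • d) + (1 / 2 : ℝ) • ((2 : ℝ) • z - w) := by
      module
    rw [hz]
    exact hq.2 (mem_univ _) (mem_univ _) (by norm_num) (by norm_num) (by norm_num)
  refine tendsto_atBot_mono hmid (tendsto_atBot_add_const_right _ _ ?_)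
  exact (hw.comp (tendsto_id.const_mul_atTop two_pos)).const_mul_atBot one_half_pos

lemma ConvexOn.isConstantAlong_or_tendsto_atBot {q : E → ℝ} (hq : ConvexOn ℝ univ q)
    (hpol : IsPolynomialOnLines q) {d : E} (hd : IsRecessionDirection q d) :
    IsConstantAlong q d ∨ ∀ x, Tendsto (fun t : ℝ => q (x + t • d)) atTop atBot := by
  by_cases hbot : ∃ w, Tendsto (fun t : ℝ => q (w + t • d)) atTop atBot
  · obtain ⟨w, hw⟩ := hbot
    exact .inr (hq.tendsto_atBot_of_tendsto_atBot hw)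
  refine .inl fun x t => ?_
  obtain ⟨p, hp⟩ := hpol x d
  have hanti : Antitone fun t => p.eval t := fun s t hst => by
    have := hd (x + s • d) (t - s) (sub_nonneg.2 hst)
    rwa [add_assoc, ← add_smul, add_sub_cancel, hp, hp] at this
  have hnot : ¬ Tendsto (fun t => p.eval t) atTop atBot := by
    simpa only [← hp] using not_exists.1 hbot x
  rw [hp, p.eval_eq_eval_zero_of_antitone hanti hnot t, ← hp, zero_smul, add_zero]

lemma exists_forall_le_zero_of_isConstantAlong_or_tendsto_atBot {ι : Type*} [Finite ι]
    {q : ι → E → ℝ} {d z : E}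
    (h : ∀ i, (IsConstantAlong (q i) d ∧ q i z ≤ 0) ∨
      Tendsto (fun t : ℝ => q i (z + t • d)) atTop atBot) :
    ∃ x, ∀ i, q i x ≤ 0 := by
  have hev : ∀ᶠ t : ℝ in atTop, ∀ i, q i (z + t • d) ≤ 0 := by
    refine eventually_all.2 fun i => ?_
    rcases h i with ⟨hconst, hz⟩ | hbot
    · exact .of_forall fun t => (hconst z t).trans_le hz
    · exact hbot.eventually (eventually_le_atBot 0)
  obtain ⟨t, ht⟩ := hev.exists
  exact ⟨_, ht⟩

end Lines

lemma exists_forall_le_zero_of_isBounded {X ι : Type*} [PseudoMetricSpace X] [ProperSpace X]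
    {q : ι → X → ℝ}
    (hc : ∀ i, Continuous (q i)) (hb : IsBounded {x | ∀ i, q i x ≤ 1})
    (hsol : ∀ δ > 0, ∃ x, ∀ i, q i x ≤ δ) : ∃ x, ∀ i, q i x ≤ 0 := by
  set S : ℕ → Set X := fun k => {x | ∀ i, q i x ≤ 1 / ((k : ℝ) + 1)}
  have hclosed (k : ℕ) : IsClosed (S k) := by
    simp only [S, ofPred_forall]
    exact isClosed_iInter fun i => isClosed_le (hc i) continuous_const
  have hanti (k : ℕ) : S (k + 1) ⊆ S k := fun x hx i =>
    (hx i).trans (by gcongr; linarith)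
  have hne (k : ℕ) : (S k).Nonempty := hsol _ (by positivity)
  have hcompact : IsCompact (S 0) :=
    Metric.isCompact_of_isClosed_isBounded (hclosed 0) (by simpa [S] using hb)
  obtain ⟨x, hx⟩ := hcompact.nonempty_iInter_of_sequence_nonempty_isCompact_isClosed S hanti hne
    hclosed
  exact ⟨x, fun i => ge_of_tendsto' tendsto_one_div_add_atTop_nhds_zero_nat
    fun k => mem_iInter.1 hx k i⟩

section Normed

variable {E : Type*} [NormedAddCommGroup E] [NormedSpace ℝ E]

lemma ConvexOn.isRecessionDirection_of_tendsto {q : E → ℝ} (hq : ConvexOn ℝ univ q)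
    (hc : Continuous q) {y : ℕ → E} {d : E} {C : ℝ} (hyC : ∀ k, q (y k) ≤ C)
    (hy : Tendsto (fun k => ‖y k‖) atTop atTop)
    (hyd : Tendsto (fun k => ‖y k‖⁻¹ • y k) atTop (𝓝 d)) : IsRecessionDirection q d := by
  intro x t ht
  set lam : ℕ → ℝ := fun k => t * ‖y k‖⁻¹
  have hlam : Tendsto lam atTop (𝓝 0) := by
    simpa using (tendsto_inv_atTop_zero.comp hy).const_mul t
  have hlam0 (k : ℕ) : 0 ≤ lam k := by positivity
  have hz : Tendsto (fun k => (1 - lam k) • x + lam k • y k) atTop (𝓝 (x + t • d)) := by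
    have : Tendsto (fun k => x + t • (‖y k‖⁻¹ • y k) - lam k • x) atTop
        (𝓝 (x + t • d - (0 : ℝ) • x)) :=
      (tendsto_const_nhds.add (hyd.const_smul t)).sub (hlam.smul_const x)
    convert this using 2 with k
    · simp only [lam, sub_smul, one_smul, mul_smul]
      abel
    · simp
  have hbound : Tendsto (fun k => (1 - lam k) * q x + lam k * C) atTop (𝓝 (q x)) := by
    simpa using (((tendsto_const_nhds (x := (1 : ℝ))).sub hlam).mul_const (q x)).add
      (hlam.mul_const C)
  refine le_of_tendsto_of_tendsto ((hc.tendsto _).comp hz) hbound ?_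
  filter_upwards [hlam.eventually (eventually_le_nhds one_pos)] with k hk
  calc q ((1 - lam k) • x + lam k • y k) ≤ (1 - lam k) * q x + lam k * q (y k) :=
        hq.2 (mem_univ x) (mem_univ (y k)) (by linarith) (hlam0 k) (by ring)
    _ ≤ (1 - lam k) * q x + lam k * C := by gcongr; exact hyC k

lemma exists_seq_tendsto_norm_atTop_of_not_isBounded [ProperSpace E] {S : Set E}
    (hS : ¬ IsBounded S) : ∃ (y : ℕ → E) (d : E), (∀ k, y k ∈ S) ∧ d ≠ 0 ∧
      Tendsto (fun k => ‖y k‖) atTop atTop ∧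
      Tendsto (fun k => ‖y k‖⁻¹ • y k) atTop (𝓝 d) := by
  simp only [isBounded_iff_forall_norm_le, not_exists, not_forall, not_le] at hS
  choose x hxS hx using fun k : ℕ => hS k
  have hpos (k : ℕ) : 0 < ‖x k‖ := (Nat.cast_nonneg k).trans_lt (hx k)
  have hsphere (k : ℕ) : ‖x k‖⁻¹ • x k ∈ Metric.sphere (0 : E) 1 := by
    simp [norm_smul, (hpos k).ne']
  obtain ⟨d, hd, φ, hφ, hlim⟩ := (isCompact_sphere (0 : E) 1).tendsto_subseq hsphere
  refine ⟨x ∘ φ, d, fun k => hxS _, ne_zero_of_mem_sphere one_ne_zero ⟨d, hd⟩, ?_, hlim⟩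
  refine tendsto_atTop_mono (fun k => (hx (φ k)).le) ?_
  exact tendsto_natCast_atTop_atTop.comp hφ.tendsto_atTop

theorem exists_forall_le_zero_of_forall_exists_le [FiniteDimensional ℝ E] {ι : Type*} [Finite ι]
    {q : ι → E → ℝ} (hconv : ∀ i, ConvexOn ℝ univ (q i))
    (hpol : ∀ i, IsPolynomialOnLines (q i))
    (hsol : ∀ δ > 0, ∃ x, ∀ i, q i x ≤ δ) : ∃ x, ∀ i, q i x ≤ 0 := by
  induction hN : Module.finrank ℝ E using Nat.strong_induction_on generalizing E ι with
  | _ N ih =>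
  have hc (i : ι) : Continuous (q i) := continuousOn_univ.1 ((hconv i).continuousOn isOpen_univ)
  by_cases hb : IsBounded {x | ∀ i, q i x ≤ 1}
  · exact exists_forall_le_zero_of_isBounded hc hb hsol
  obtain ⟨y, d, hyS, hd, hy, hyd⟩ := exists_seq_tendsto_norm_atTop_of_not_isBounded hb
  have hdich (i : ι) := (hconv i).isConstantAlong_or_tendsto_atBot (hpol i)
    ((hconv i).isRecessionDirection_of_tendsto (hc i) (fun k => hyS k i) hy hyd)
  obtain ⟨f, hf⟩ := Module.Projective.exists_dual_eq_one ℝ hd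
  have hdim : Module.finrank ℝ (LinearMap.ker f) < N :=
    hN ▸ Submodule.finrank_lt fun h => by simp [LinearMap.ker_eq_top.1 h] at hf
  -- projecting along `d` onto `ker f` does not change the constraints that are constant along `d`
  have hsolKer : ∀ δ > 0, ∃ z : LinearMap.ker f, ∀ i : {i // IsConstantAlong (q i) d},
      q i z ≤ δ := by
    intro δ hδ
    obtain ⟨x, hx⟩ := hsol δ hδ
    refine ⟨⟨x - f x • d, by simp [hf]⟩, fun i => ?_⟩
    simpa [sub_eq_add_neg, ← neg_smul, i.2 x] using hx i
  obtain ⟨z, hz⟩ := ih _ hdim (ι := {i // IsConstantAlong (q i) d})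
    (q := fun i => q i ∘ (LinearMap.ker f).subtype) (fun i => (hconv i).comp_linearMap _)
    (fun i => (hpol i).comp_linearMap _) hsolKer rfl
  refine exists_forall_le_zero_of_isConstantAlong_or_tendsto_atBot (d := d) (z := z) fun i => ?_
  by_cases hi : IsConstantAlong (q i) d
  · exact .inl ⟨hi, hz ⟨i, hi⟩⟩
  · exact .inr ((hdich i).resolve_left hi z)

end Normed

theorem stmt_13_general {n m p : ℕ} (P : MvPolynomial (Fin n) ℝ)
    (G : Fin m → MvPolynomial (Fin n) ℝ) (H : Fin p → MvPolynomial (Fin n) ℝ)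
    (f₀ : (Fin n → ℝ) → ℝ) (hf₀ : f₀ = fun x => MvPolynomial.eval x P)
    (g : Fin m → (Fin n → ℝ) → ℝ) (hg : ∀ i, g i = fun x => MvPolynomial.eval x (G i))
    (h : Fin p → (Fin n → ℝ) → ℝ) (hh : ∀ j, h j = fun x => MvPolynomial.eval x (H j))
    (hconvf : ConvexOn ℝ Set.univ f₀)
    (hconvg : ∀ i, ConvexOn ℝ Set.univ (g i)) (hconvh : ∀ j, ConvexOn ℝ Set.univ (h j))
    (Feas : Set (Fin n → ℝ))
    (hFeas : Feas = {x | (∀ i, g i x ≤ 0) ∧ ∀ j, h j x ≤ 0})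
    (fstar : ℝ) (hfstar : IsGLB (f₀ '' Feas) fstar) :
    ∀ ε : ℝ, 0 < ε → ∃ δ : ℝ, 0 < δ ∧
      ∀ x : Fin n → ℝ, (∀ i, g i x ≤ δ) → (∀ j, h j x ≤ δ) →
        0 < f₀ x - fstar + ε := by
  intro ε hε
  by_contra! hsol
  let q : Option (Fin m ⊕ Fin p) → (Fin n → ℝ) → ℝ :=
    fun o => o.elim (fun x => f₀ x + (ε - fstar)) (Sum.elim g h)
  have hconv : ∀ o, ConvexOn ℝ univ (q o) := by
    rintro (_ | i | j)
    exacts [hconvf.add_const _, hconvg i, hconvh j]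
  have hpol : ∀ o, IsPolynomialOnLines (q o) := by
    rintro (_ | i | j)
    · show IsPolynomialOnLines fun x => f₀ x + (ε - fstar)
      exact hf₀ ▸ (MvPolynomial.isPolynomialOnLines_eval P).add_const _
    · show IsPolynomialOnLines (g i)
      exact hg i ▸ MvPolynomial.isPolynomialOnLines_eval (G i)
    · show IsPolynomialOnLines (h j)
      exact hh j ▸ MvPolynomial.isPolynomialOnLines_eval (H j)
  obtain ⟨x, hx⟩ := exists_forall_le_zero_of_forall_exists_le hconv hpol fun δ hδ => by
    obtain ⟨x, hgx, hhx, hfx⟩ := hsol δ hδ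
    refine ⟨x, ?_⟩
    rintro (_ | i | j)
    exacts [by simp only [q, Option.elim]; linarith, hgx i, hhx j]
  have hxF : x ∈ Feas := hFeas ▸ ⟨fun i => hx (some (.inl i)), fun j => hx (some (.inr j))⟩
  have hfx : f₀ x + (ε - fstar) ≤ 0 := hx none
  linarith [hfstar.1 ⟨x, hxF, rfl⟩]

theorem stmt_13 {n m p : ℕ} (P : MvPolynomial (Fin n) ℝ)
    (G : Fin m → MvPolynomial (Fin n) ℝ) (H : Fin p → MvPolynomial (Fin n) ℝ)
    (f₀ : (Fin n → ℝ) → ℝ) (hf₀ : f₀ = fun x => MvPolynomial.eval x P)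
    (g : Fin m → (Fin n → ℝ) → ℝ) (hg : ∀ i, g i = fun x => MvPolynomial.eval x (G i))
    (h : Fin p → (Fin n → ℝ) → ℝ) (hh : ∀ j, h j = fun x => MvPolynomial.eval x (H j))
    (hconvf : ConvexOn ℝ Set.univ f₀)
    (hconvg : ∀ i, ConvexOn ℝ Set.univ (g i)) (hconvh : ∀ j, ConvexOn ℝ Set.univ (h j))
    (Feas : Set (Fin n → ℝ))
    (hFeas : Feas = {x | (∀ i, g i x ≤ 0) ∧ ∀ j, h j x ≤ 0})
    (hFne : Feas.Nonempty)
    (fstar : ℝ) (hfstar : IsGLB (f₀ '' Feas) fstar) :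
    ∀ ε : ℝ, 0 < ε → ∃ δ : ℝ, 0 < δ ∧
      ∀ x : Fin n → ℝ, (∀ i, g i x ≤ δ) → (∀ j, h j x ≤ δ) →
        0 < f₀ x - fstar + ε :=
  stmt_13_general P G H f₀ hf₀ g hg h hh hconvf hconvg hconvh Feas hFeas fstar hfstar
end
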